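/- arXiv:1710.03331 — 11 statements merged into one kernel-verified Lean document; each statement's English description precedes it below -/
import Mathlib

section
/- A nonconforming method is quasi-optimal if and only if it is fully algebraically consistent and fully stable. Precisely: the linear map P : V → X (with range in S) satisfies an estimate ‖v − P v‖ ≤ C · dist(v,S) for all v ∈ V and some constant C if and only if P is bounded and P u = u for every u ∈ V ∩ S. -/
/-!
Quasi-optimality gives stability because `dist(v, S) ≤ ‖v‖`, and consistency because
`dist(u, S) = 0` for `u ∈ S`. Conversely, consistency lets one replace `v` by `v - u` for any
`u ∈ V ∩ S` without changing `v - P v`, so stability bounds `‖v - P v‖` by a multiple of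
`dist(v, V ∩ S)`. This distance is comparable to `dist(v, S)` by the open mapping theorem
applied to the surjection `V × S → X`, `(v, s) ↦ v + s`.
-/

open Metric

theorem Metric.le_mul_infDist {α : Type*} [PseudoMetricSpace α] {x : α} {s : Set α}
    (hs : s.Nonempty) {a M : ℝ} (hM : 0 ≤ M) (h : ∀ y ∈ s, a ≤ M * dist x y) :
    a ≤ M * infDist x s := by
  rcases hM.eq_or_lt with rfl | hM
  · obtain ⟨y, hy⟩ := hs
    simpa using h y hy
  · rw [← div_le_iff₀' hM, le_infDist hs]
    intro y hy
    rw [div_le_iff₀' hM]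
    exact h y hy

section

variable {𝕜 X : Type*} [NontriviallyNormedField 𝕜] [NormedAddCommGroup X] [NormedSpace 𝕜 X]

theorem Submodule.exists_mem_inf_norm_sub_le_of_sup_eq_top [CompleteSpace X]
    (V S : Submodule 𝕜 X) [CompleteSpace V] [CompleteSpace S] (hsum : V ⊔ S = ⊤) :
    ∃ K ≥ 0, ∀ v : V, ∀ s ∈ S, ∃ u : V, (u : X) ∈ S ∧ ‖(v : X) - u‖ ≤ K * ‖(v : X) - s‖ := by
  let T : V × S →L[𝕜] X := V.subtypeL.coprod S.subtypeL
  have hT : Function.Surjective T := by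
    intro x
    obtain ⟨v, hv, s, hs, rfl⟩ := Submodule.mem_sup.1 (hsum ▸ Submodule.mem_top : x ∈ V ⊔ S)
    exact ⟨(⟨v, hv⟩, ⟨s, hs⟩), rfl⟩
  obtain ⟨K, hK, hpre⟩ := T.exists_preimage_norm_le hT
  refine ⟨K, hK.le, fun v s hs => ?_⟩
  obtain ⟨⟨v', s'⟩, hvs, hnorm⟩ := hpre ((v : X) - s)
  have hsum' : (v' : X) + s' = v - s := hvs
  refine ⟨v - v', ?_, ?_⟩
  · have : ((v - v' : V) : X) = s + s' := by
      rw [Submodule.coe_sub, eq_sub_of_add_eq hsum']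
      abel
    rw [this]
    exact S.add_mem hs s'.2
  · calc ‖(v : X) - (v - v' : V)‖ = ‖v'‖ := by rw [Submodule.coe_sub, sub_sub_cancel]; rfl
      _ ≤ ‖(v', s')‖ := norm_fst_le (v', s')
      _ ≤ K * ‖(v : X) - s‖ := hnorm

theorem norm_sub_apply_le_of_consistent {V S : Submodule 𝕜 X} (P : V →ₗ[𝕜] X) {C : ℝ}
    (hbound : ∀ v : V, ‖P v‖ ≤ C * ‖(v : X)‖) (hcons : ∀ u : V, (u : X) ∈ S → P u = u)
    (v u : V) (hu : (u : X) ∈ S) : ‖(v : X) - P v‖ ≤ (1 + C) * ‖(v : X) - u‖ := by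
  have hsplit : (v : X) - P v = ((v - u : V) : X) - P (v - u) := by
    rw [map_sub, hcons u hu, Submodule.coe_sub]
    abel
  calc ‖(v : X) - P v‖ = ‖((v - u : V) : X) - P (v - u)‖ := by rw [hsplit]
    _ ≤ ‖((v - u : V) : X)‖ + ‖P (v - u)‖ := norm_sub_le _ _
    _ ≤ (1 + C) * ‖((v - u : V) : X)‖ := by linarith [hbound (v - u)]
    _ = (1 + C) * ‖(v : X) - u‖ := by rw [Submodule.coe_sub]

theorem norm_apply_le_of_norm_sub_apply_le_infDist {V S : Submodule 𝕜 X} (P : V → X) {C : ℝ}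
    (hC : ∀ v : V, ‖(v : X) - P v‖ ≤ C * infDist (v : X) S) (v : V) :
    ‖P v‖ ≤ (1 + |C|) * ‖(v : X)‖ := by
  have hdist : infDist (v : X) S ≤ ‖(v : X)‖ := by
    simpa using infDist_le_dist_of_mem (x := (v : X)) S.zero_mem
  have herr : ‖(v : X) - P v‖ ≤ |C| * ‖(v : X)‖ :=
    (hC v).trans <| (mul_le_mul_of_nonneg_right (le_abs_self C) infDist_nonneg).trans <|
      mul_le_mul_of_nonneg_left hdist (abs_nonneg C)
  calc ‖P v‖ ≤ ‖(v : X)‖ + ‖(v : X) - P v‖ := norm_le_insert _ _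
    _ ≤ (1 + |C|) * ‖(v : X)‖ := by linarith

theorem apply_eq_self_of_norm_sub_apply_le_infDist {V S : Submodule 𝕜 X} (P : V → X) {C : ℝ}
    (hC : ∀ v : V, ‖(v : X) - P v‖ ≤ C * infDist (v : X) S) (u : V) (hu : (u : X) ∈ S) :
    P u = u := by
  have := hC u
  rw [infDist_zero_of_mem hu, mul_zero] at this
  exact (sub_eq_zero.1 (norm_le_zero_iff.1 this)).symm

end

theorem quasiOptimal_iff_consistent_and_stable_general
    {X : Type*} [NormedAddCommGroup X] [InnerProductSpace ℝ X] [CompleteSpace X]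
    (V S : Submodule ℝ X) [CompleteSpace V] [FiniteDimensional ℝ S]
    (hsum : V ⊔ S = ⊤)
    (P : V →ₗ[ℝ] X) :
    (∃ C : ℝ, ∀ v : V, ‖(v : X) - P v‖ ≤ C * Metric.infDist (v : X) (S : Set X)) ↔
      ((∃ C : ℝ, ∀ v : V, ‖P v‖ ≤ C * ‖(v : X)‖) ∧
        ∀ u : V, (u : X) ∈ S → P u = (u : X)) := by
  constructor
  · rintro ⟨C, hC⟩
    exact ⟨⟨1 + |C|, norm_apply_le_of_norm_sub_apply_le_infDist P hC⟩,
      apply_eq_self_of_norm_sub_apply_le_infDist P hC⟩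
  · rintro ⟨⟨C, hC⟩, hcons⟩
    obtain ⟨K, hK, hnear⟩ := V.exists_mem_inf_norm_sub_le_of_sup_eq_top S hsum
    have hbound : ∀ v : V, ‖P v‖ ≤ |C| * ‖(v : X)‖ := fun v =>
      (hC v).trans (mul_le_mul_of_nonneg_right (le_abs_self C) (norm_nonneg _))
    refine ⟨(1 + |C|) * K, fun v => le_mul_infDist ⟨0, S.zero_mem⟩ (by positivity) ?_⟩
    intro s hs
    obtain ⟨u, hu, hvu⟩ := hnear v s hs
    calc ‖(v : X) - P v‖ ≤ (1 + |C|) * ‖(v : X) - u‖ :=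
          norm_sub_apply_le_of_consistent P hbound hcons v u hu
      _ ≤ (1 + |C|) * (K * dist (v : X) s) := by
          rw [dist_eq_norm]
          gcongr
      _ = (1 + |C|) * K * dist (v : X) s := by ring

/-- **Characterization of quasi-optimality.** A nonconforming method is quasi-optimal
if and only if it is fully algebraically consistent and fully stable: the linear map
`P : V → X` with range in `S` satisfies `‖v − P v‖ ≤ C · dist(v,S)` for all `v ∈ V`
and some constant `C` iff `P` is bounded and `P u = u` for every `u ∈ V ∩ S`. -/
theorem quasiOptimal_iff_consistent_and_stable
    {X : Type*} [NormedAddCommGroup X] [InnerProductSpace ℝ X] [CompleteSpace X]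
    (V S : Submodule ℝ X) [CompleteSpace V] [FiniteDimensional ℝ S]
    (hSne : S ≠ ⊥) (hsum : V ⊔ S = ⊤)
    (P : V →ₗ[ℝ] X) (hrange : ∀ v : V, P v ∈ S) :
    (∃ C : ℝ, ∀ v : V, ‖(v : X) - P v‖ ≤ C * Metric.infDist (v : X) (S : Set X)) ↔
      ((∃ C : ℝ, ∀ v : V, ‖P v‖ ≤ C * ‖(v : X)‖) ∧
        ∀ u : V, (u : X) ∈ S → P u = (u : X)) :=
  quasiOptimal_iff_consistent_and_stable_general V S hsum P
end

section
/- For a quasi-optimal method the quasi-optimality constant equals the operator norm of the extended approximation operator: if P : V → X (range in S) is bounded with P u = u for all u ∈ V ∩ S, and S ≠ X, then the smallest constant C with ‖v − P v‖ ≤ C · dist(v,S) for all v ∈ V satisfies Cqopt = ‖id_X − P̄‖ = ‖P̄‖, where P̄ : X → X is the unique bounded linear projection of X onto S extending P. -/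
/-!
Write `Q = 1 - P̄`. As `Q` vanishes on `S`, `‖Q v‖ = ‖Q (v - s)‖ ≤ ‖Q‖ ‖v - s‖` for all `s ∈ S`, so
`‖Q‖` is an admissible constant; conversely each `x = v + s` with `v ∈ V`, `s ∈ S` has `Q x = Q v`
and `dist(v, S) ≤ ‖x‖`, so every admissible constant bounds `‖Q‖`.

The equality `‖1 - P̄‖ = ‖P̄‖` is Kato's identity for idempotents `P ≠ 0, 1` on an inner product
space. With `a = P x` and `b = x - P x`, the bound `‖t a‖ = ‖P (b + t a)‖ ≤ ‖P‖ ‖b + t a‖` says that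
a real quadratic in `t` is nonnegative; its discriminant condition gives `‖b‖ ≤ ‖P‖ ‖a + b‖`, that
is `‖(1 - P) x‖ ≤ ‖P‖ ‖x‖`, and the same applied to `1 - P` gives the reverse inequality.
-/

open Metric

lemma add_two_mul_add_nonneg_of_discrim_le {k A B g : ℝ} (hk : 1 ≤ k) (hA : 0 ≤ A) (hB : 0 ≤ B)
    (hg : k * g ^ 2 ≤ (k - 1) * A * B) : 0 ≤ k * A + 2 * k * g + (k - 1) * B := by
  -- AM-GM: `k A + (k - 1) B ≥ 2 √(k (k - 1) A B) ≥ 2 k |g|`.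
  have hsq : (2 * k * g) ^ 2 ≤ (k * A + (k - 1) * B) ^ 2 := by
    nlinarith [sq_nonneg (k * A - (k - 1) * B)]
  linarith [(abs_le_of_sq_le_sq' hsq (by positivity)).1]

lemma one_le_norm_of_isIdempotentElem {R : Type*} [NormedRing R] {p : R} (hp : IsIdempotentElem p)
    (h0 : p ≠ 0) : 1 ≤ ‖p‖ := by
  have hpos : 0 < ‖p‖ := norm_pos_iff.2 h0
  have : ‖p‖ * 1 ≤ ‖p‖ * ‖p‖ := by simpa [hp.eq] using norm_mul_le p p
  exact le_of_mul_le_mul_left this hpos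

section InnerProduct

variable {X : Type*} [NormedAddCommGroup X] [InnerProductSpace ℝ X]

lemma norm_le_mul_norm_add_of_forall_norm_smul_le {a b : X} {p : ℝ} (hp : 1 ≤ p)
    (h : ∀ t : ℝ, ‖t • a‖ ≤ p * ‖b + t • a‖) : ‖b‖ ≤ p * ‖a + b‖ := by
  set g := inner ℝ b a
  have hquad : ∀ t : ℝ,
      0 ≤ ((p ^ 2 - 1) * ‖a‖ ^ 2) * (t * t) + (2 * p ^ 2 * g) * t + p ^ 2 * ‖b‖ ^ 2 := by
    intro t
    have hsq := pow_le_pow_left₀ (norm_nonneg _) (h t) 2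
    rw [mul_pow, norm_add_sq_real, norm_smul, real_inner_smul_right, mul_pow, Real.norm_eq_abs,
      sq_abs] at hsq
    nlinarith
  have hdisc := discrim_le_zero hquad
  rw [discrim] at hdisc
  have hkey := add_two_mul_add_nonneg_of_discrim_le (k := p ^ 2) (A := ‖a‖ ^ 2) (B := ‖b‖ ^ 2)
    (g := g) (one_le_pow₀ hp) (by positivity) (by positivity) (by nlinarith [one_le_pow₀ (n := 2) hp])
  refine (sq_le_sq₀ (norm_nonneg _) (by positivity)).1 ?_
  rw [mul_pow, norm_add_sq_real, real_inner_comm]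
  linarith

lemma norm_one_sub_le_norm_of_isIdempotentElem {P : X →L[ℝ] X} (hP : IsIdempotentElem P)
    (h0 : P ≠ 0) : ‖1 - P‖ ≤ ‖P‖ := by
  have hPP : ∀ x, P (P x) = P x := DFunLike.congr_fun hP.eq
  refine ContinuousLinearMap.opNorm_le_bound _ (norm_nonneg _) fun x => ?_
  have hx : P (x - P x) = 0 := by rw [map_sub, hPP, sub_self]
  have := norm_le_mul_norm_add_of_forall_norm_smul_le (a := P x) (b := x - P x)
    (one_le_norm_of_isIdempotentElem hP h0) fun t => by
      simpa [hx, hPP] using P.le_opNorm (x - P x + t • P x)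
  simpa using this

lemma norm_one_sub_eq_norm_of_isIdempotentElem {P : X →L[ℝ] X} (hP : IsIdempotentElem P)
    (h0 : P ≠ 0) (h1 : P ≠ 1) : ‖1 - P‖ = ‖P‖ := by
  refine le_antisymm (norm_one_sub_le_norm_of_isIdempotentElem hP h0) ?_
  simpa using norm_one_sub_le_norm_of_isIdempotentElem hP.one_sub (sub_ne_zero.2 h1.symm)

end InnerProduct

section InfDist

variable {𝕜 E F : Type*} [NontriviallyNormedField 𝕜] [NormedAddCommGroup E] [NormedSpace 𝕜 E]
  [NormedAddCommGroup F] [NormedSpace 𝕜 F] {T : E →L[𝕜] F} {S : Submodule 𝕜 E}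

lemma norm_apply_le_opNorm_mul_infDist (hTS : ∀ s ∈ S, T s = 0) (x : E) :
    ‖T x‖ ≤ ‖T‖ * infDist x S := by
  rw [infDist_eq_iInf, Real.mul_iInf_of_nonneg (norm_nonneg T)]
  have : Nonempty (S : Set E) := ⟨⟨0, S.zero_mem⟩⟩
  refine le_ciInf fun ⟨s, hs⟩ => ?_
  calc ‖T x‖ = ‖T (x - s)‖ := by rw [map_sub, hTS s hs, sub_zero]
    _ ≤ ‖T‖ * dist x s := by rw [dist_eq_norm]; exact T.le_opNorm _

lemma exists_mem_apply_eq_and_infDist_le {V : Submodule 𝕜 E} (hsum : V ⊔ S = ⊤)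
    (hTS : ∀ s ∈ S, T s = 0) (x : E) : ∃ v ∈ V, T v = T x ∧ infDist v S ≤ ‖x‖ := by
  obtain ⟨v, hv, s, hs, rfl⟩ := Submodule.mem_sup.1 (hsum ▸ Submodule.mem_top (x := x))
  refine ⟨v, hv, by rw [map_add, hTS s hs, add_zero], ?_⟩
  calc infDist v S ≤ dist v (-s) := infDist_le_dist_of_mem (S.neg_mem hs)
    _ = ‖v + s‖ := by rw [dist_eq_norm, sub_neg_eq_add]

lemma opNorm_le_of_forall_norm_apply_le_mul_infDist {V : Submodule 𝕜 E} (hsum : V ⊔ S = ⊤)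
    (hTS : ∀ s ∈ S, T s = 0) (hT : T ≠ 0) {C : ℝ} (hC : ∀ v ∈ V, ‖T v‖ ≤ C * infDist v S) :
    ‖T‖ ≤ C := by
  have hC0 : 0 ≤ C := by
    obtain ⟨x, hx⟩ := DFunLike.ne_iff.1 hT
    obtain ⟨v, hv, hTv, -⟩ := exists_mem_apply_eq_and_infDist_le hsum hTS x
    have hpos : 0 < C * infDist v S := (norm_pos_iff.2 (hTv ▸ hx)).trans_le (hC v hv)
    exact (pos_of_mul_pos_left hpos infDist_nonneg).le
  refine T.opNorm_le_bound hC0 fun x => ?_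
  obtain ⟨v, hv, hTv, hdist⟩ := exists_mem_apply_eq_and_infDist_le hsum hTS x
  calc ‖T x‖ = ‖T v‖ := by rw [hTv]
    _ ≤ C * infDist v S := hC v hv
    _ ≤ C * ‖x‖ := mul_le_mul_of_nonneg_left hdist hC0

end InfDist

theorem quasiOptimality_constant_eq_norm_extended_general
    {X : Type*} [NormedAddCommGroup X] [InnerProductSpace ℝ X]
    (V S : Submodule ℝ X)
    (hSne : S ≠ ⊥) (hStop : S ≠ ⊤) (hsum : V ⊔ S = ⊤)
    (P : V →ₗ[ℝ] X)
    (Pbar : X →L[ℝ] X)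
    (hproj : ∀ x : X, Pbar (Pbar x) = Pbar x)
    (hrangebar : Set.range Pbar = (S : Set X))
    (hext : ∀ v : V, Pbar v = P v) :
    IsLeast {C : ℝ | ∀ v : V, ‖(v : X) - P v‖ ≤ C * Metric.infDist (v : X) (S : Set X)}
        ‖ContinuousLinearMap.id ℝ X - Pbar‖ ∧
      ‖ContinuousLinearMap.id ℝ X - Pbar‖ = ‖Pbar‖ := by
  have hidem : IsIdempotentElem Pbar := ContinuousLinearMap.ext hproj
  have hfix : ∀ s ∈ S, Pbar s = s := by
    rintro s hs
    obtain ⟨y, rfl⟩ : s ∈ Set.range Pbar := hrangebar ▸ hs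
    exact hproj y
  have hker : ∀ s ∈ S, (1 - Pbar) s = 0 := fun s hs => by simp [hfix s hs]
  have hresidual : ∀ v : V, (v : X) - P v = (1 - Pbar) v := fun v => by simp [hext]
  have hPbar0 : Pbar ≠ 0 := by
    obtain ⟨s, hs, hs0⟩ := Submodule.exists_mem_ne_zero_of_ne_bot hSne
    exact fun h => hs0 (by rw [← hfix s hs, h]; rfl)
  have hPbar1 : Pbar ≠ 1 := fun h => hStop <| Submodule.eq_top_iff'.2 fun x => by
    rw [← SetLike.mem_coe, ← hrangebar, h]
    exact ⟨x, rfl⟩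
  refine ⟨⟨fun v => hresidual v ▸ norm_apply_le_opNorm_mul_infDist hker v, fun C hC => ?_⟩,
    norm_one_sub_eq_norm_of_isIdempotentElem hidem hPbar0 hPbar1⟩
  exact opNorm_le_of_forall_norm_apply_le_mul_infDist hsum hker (sub_ne_zero.2 hPbar1.symm)
    fun v hv => hresidual ⟨v, hv⟩ ▸ hC ⟨v, hv⟩

/-- For a quasi-optimal method the quasi-optimality constant equals the operator norm
of the extended approximation operator: if `P : V → X` (range in `S`) is bounded with
`P u = u` for all `u ∈ V ∩ S`, and `S ≠ X`, then the smallest constant `C` with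
`‖v − P v‖ ≤ C · dist(v,S)` for all `v ∈ V` is `‖id − P̄‖ = ‖P̄‖`, where `P̄ : X → X`
is the (unique) bounded linear projection of `X` onto `S` extending `P`. -/
theorem quasiOptimality_constant_eq_norm_extended
    {X : Type*} [NormedAddCommGroup X] [InnerProductSpace ℝ X] [CompleteSpace X]
    (V S : Submodule ℝ X) [CompleteSpace V] [FiniteDimensional ℝ S]
    (hSne : S ≠ ⊥) (hStop : S ≠ ⊤) (hsum : V ⊔ S = ⊤)
    (P : V →ₗ[ℝ] X) (hrange : ∀ v : V, P v ∈ S)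
    (hbdd : ∃ C : ℝ, ∀ v : V, ‖P v‖ ≤ C * ‖(v : X)‖)
    (hcons : ∀ u : V, (u : X) ∈ S → P u = (u : X))
    (Pbar : X →L[ℝ] X)
    (hproj : ∀ x : X, Pbar (Pbar x) = Pbar x)
    (hrangebar : Set.range Pbar = (S : Set X))
    (hext : ∀ v : V, Pbar v = P v) :
    IsLeast {C : ℝ | ∀ v : V, ‖(v : X) - P v‖ ≤ C * Metric.infDist (v : X) (S : Set X)}
        ‖ContinuousLinearMap.id ℝ X - Pbar‖ ∧
      ‖ContinuousLinearMap.id ℝ X - Pbar‖ = ‖Pbar‖ :=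
  quasiOptimality_constant_eq_norm_extended_general V S hSne hStop hsum P Pbar hproj hrangebar hext
end

section
/- Existence and uniqueness of the extended approximation operator: if the linear map P : V → X (with range in S) satisfies P u = u for all u ∈ V ∩ S and P is bounded, then there exists a unique bounded linear projection P̄ : X → X with range S (i.e. P̄ ∘ P̄ = P̄ and P̄(X) = S) such that P̄ restricted to V equals P. -/
/-!
Because `P` agrees with the identity on `V ∩ S`, it glues with the inclusion of `S` to a linear
map on `V + S = X`; this map fixes `S` and takes values in `S`, so it is a projection onto `S`.
It is continuous: `X ⧸ V` is a quotient of `S`, so `Vᗮ` is finite-dimensional, and the map is `P`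
after the orthogonal projection onto `V` plus a linear map on `Vᗮ`. Any other such projection is
`P` on `V` and the identity on `S`, hence agrees with it on `V + S = X`.
-/

theorem LinearMap.exists_extend_of_agree {K M N : Type*} [DivisionRing K] [AddCommGroup M]
    [Module K M] [AddCommGroup N] [Module K N] {V W : Submodule K M}
    (f : V →ₗ[K] N) (g : W →ₗ[K] N) (hfg : ∀ (x : V) (y : W), (x : M) = y → f x = g y) :
    ∃ h : M →ₗ[K] N, h ∘ₗ V.subtype = f ∧ h ∘ₗ W.subtype = g := by
  let F : M →ₗ.[K] N := LinearPMap.sup ⟨V, f⟩ ⟨W, g⟩ hfg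
  obtain ⟨h, hF⟩ := F.toFun.exists_extend
  have hleft := LinearPMap.left_le_sup ⟨V, f⟩ ⟨W, g⟩ hfg
  have hright := LinearPMap.right_le_sup ⟨V, f⟩ ⟨W, g⟩ hfg
  refine ⟨h, LinearMap.ext fun x => ?_, LinearMap.ext fun y => ?_⟩
  · exact (LinearMap.congr_fun hF ⟨x, hleft.1 x.2⟩).trans (hleft.2 rfl).symm
  · exact (LinearMap.congr_fun hF ⟨y, hright.1 y.2⟩).trans (hright.2 rfl).symm

theorem Submodule.finiteDimensional_orthogonal_of_codisjoint {𝕜 E : Type*} [RCLike 𝕜]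
    [NormedAddCommGroup E] [InnerProductSpace 𝕜 E] {K L : Submodule 𝕜 E}
    [K.HasOrthogonalProjection] [FiniteDimensional 𝕜 L] (hKL : Codisjoint K L) :
    FiniteDimensional 𝕜 Kᗮ :=
  Module.Finite.iff_fg.mpr <|
    ((Module.Finite.iff_fg.mp ‹_›).cofg_of_codisjoint hKL.symm).fg_of_isCompl K.isCompl_orthogonal

theorem LinearMap.continuous_of_continuous_comp_subtype {𝕜 E F : Type*} [RCLike 𝕜]
    [NormedAddCommGroup E] [InnerProductSpace 𝕜 E] [NormedAddCommGroup F] [NormedSpace 𝕜 F]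
    {K : Submodule 𝕜 E} [K.HasOrthogonalProjection] [FiniteDimensional 𝕜 Kᗮ]
    (T : E →ₗ[𝕜] F) (hT : Continuous (T ∘ₗ K.subtype)) : Continuous T := by
  have hdecomp : ⇑T = fun x => (T ∘ₗ K.subtype) (K.orthogonalProjectionOnto x) +
      (T ∘ₗ Kᗮ.subtype) (Kᗮ.orthogonalProjectionOnto x) := by
    ext x
    -- `Kᗮ.orthogonalProjectionOnto x = x - K.orthogonalProjectionOnto x`
    simp
  rw [hdecomp]
  exact (hT.comp K.orthogonalProjectionOnto.continuous).add
    ((LinearMap.continuous_of_finiteDimensional _).comp Kᗮ.orthogonalProjectionOnto.continuous)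

theorem exists_unique_extended_approximation_operator_general
    {X : Type*} [NormedAddCommGroup X] [InnerProductSpace ℝ X]
    (V S : Submodule ℝ X) [CompleteSpace V] [FiniteDimensional ℝ S]
    (hsum : V ⊔ S = ⊤)
    (P : V →ₗ[ℝ] X) (hrange : ∀ v : V, P v ∈ S)
    (hcons : ∀ u : V, (u : X) ∈ S → P u = (u : X))
    (hbdd : ∃ C : ℝ, ∀ v : V, ‖P v‖ ≤ C * ‖(v : X)‖) :
    ∃! Pbar : X →L[ℝ] X,
      (∀ x : X, Pbar (Pbar x) = Pbar x) ∧ Set.range Pbar = (S : Set X) ∧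
        ∀ v : V, Pbar v = P v := by
  have hVS : Codisjoint V S := codisjoint_iff.mpr hsum
  obtain ⟨Q, hQV, hQS⟩ := LinearMap.exists_extend_of_agree P S.subtype
    fun u s hus => by simpa [hus] using hcons u (hus ▸ s.2)
  have hQfix (s : X) (hs : s ∈ S) : Q s = s := LinearMap.congr_fun hQS ⟨s, hs⟩
  have hQmem (x : X) : Q x ∈ S := by
    obtain ⟨v, hv, s, hs, rfl⟩ := Submodule.mem_sup.mp (hsum ▸ Submodule.mem_top : x ∈ V ⊔ S)
    rw [map_add, hQfix s hs]
    exact S.add_mem (LinearMap.congr_fun hQV ⟨v, hv⟩ ▸ hrange ⟨v, hv⟩) hs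
  have : FiniteDimensional ℝ Vᗮ := Submodule.finiteDimensional_orthogonal_of_codisjoint hVS
  obtain ⟨C, hC⟩ := hbdd
  have hQc : Continuous Q :=
    Q.continuous_of_continuous_comp_subtype (hQV ▸ AddMonoidHomClass.continuous_of_bound P C hC)
  refine ⟨⟨Q, hQc⟩, ⟨fun x => hQfix _ (hQmem x), ?_, fun v => LinearMap.congr_fun hQV v⟩, ?_⟩
  · exact subset_antisymm (Set.range_subset_iff.mpr hQmem) fun s hs => ⟨s, hQfix s hs⟩
  · rintro R ⟨hRidem, hRrange, hRV⟩
    refine LinearMap.ext_on_codisjoint hVS (fun v hv => ?_) (fun s hs => ?_)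
    · exact (hRV ⟨v, hv⟩).trans (LinearMap.congr_fun hQV ⟨v, hv⟩).symm
    · obtain ⟨y, rfl⟩ : s ∈ Set.range R := hRrange ▸ hs
      exact (hRidem y).trans (hQfix _ hs).symm

/-- **Extended approximation operator.** If the linear map `P : V → X` (with range in `S`)
satisfies `P u = u` for all `u ∈ V ∩ S` and `P` is bounded, then there exists a unique
bounded linear projection `P̄ : X → X` with range `S` whose restriction to `V` equals `P`. -/
theorem exists_unique_extended_approximation_operator
    {X : Type*} [NormedAddCommGroup X] [InnerProductSpace ℝ X] [CompleteSpace X]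
    (V S : Submodule ℝ X) [CompleteSpace V] [FiniteDimensional ℝ S]
    (hSne : S ≠ ⊥) (hsum : V ⊔ S = ⊤)
    (P : V →ₗ[ℝ] X) (hrange : ∀ v : V, P v ∈ S)
    (hcons : ∀ u : V, (u : X) ∈ S → P u = (u : X))
    (hbdd : ∃ C : ℝ, ∀ v : V, ‖P v‖ ≤ C * ‖(v : X)‖) :
    ∃! Pbar : X →L[ℝ] X,
      (∀ x : X, Pbar (Pbar x) = Pbar x) ∧ Set.range Pbar = (S : Set X) ∧
        ∀ v : V, Pbar v = P v :=
  exists_unique_extended_approximation_operator_general V S hsum P hrange hcons hbdd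
end

section
/- Consistency mixed with stability determines the quasi-optimality constant: assume P : V → X (range in S) is quasi-optimal, let Π_S : X → X be the orthogonal projection onto S, and let δ_V ≥ 0 be the smallest constant such that ‖Π_S v − P v‖ ≤ δ_V · ‖v − Π_S v‖ for all v ∈ V (such a constant exists). Then the quasi-optimality constant satisfies Cqopt = √(1 + δ_V²). -/
/-!
Since `P v` and `Π_S v` both lie in `S` while `v - Π_S v ⟂ S`, Pythagoras gives
`‖v - P v‖² = ‖v - Π_S v‖² + ‖Π_S v - P v‖²`, and `‖v - Π_S v‖ = dist(v, S)`.
Hence `‖Π_S v - P v‖ ≤ d ‖v - Π_S v‖` holds for all `v` exactly when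
`‖v - P v‖ ≤ √(1 + d²) dist(v, S)` does, and `d ↦ √(1 + d²)` maps the admissible
constants `d ≥ 0` onto the admissible quasi-optimality constants `C ≥ 1`.
-/

namespace Submodule

variable {𝕜 E : Type*} [RCLike 𝕜] [NormedAddCommGroup E] [InnerProductSpace 𝕜 E]
  (K : Submodule 𝕜 E) [K.HasOrthogonalProjection]

theorem infDist_eq_norm_sub_starProjection (x : E) :
    Metric.infDist x K = ‖x - K.starProjection x‖ := by
  simp only [starProjection_minimal, Metric.infDist_eq_iInf, dist_eq_norm]
  rfl

theorem norm_sub_sq_eq_norm_sub_starProjection_sq_add (x : E) {y : E} (hy : y ∈ K) :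
    ‖x - y‖ ^ 2 = ‖x - K.starProjection x‖ ^ 2 + ‖K.starProjection x - y‖ ^ 2 := by
  have horth : inner 𝕜 (x - K.starProjection x) (K.starProjection x - y) = 0 :=
    K.starProjection_inner_eq_zero x _ (K.sub_mem (K.starProjection_apply_mem x) hy)
  simpa only [sq, sub_add_sub_cancel] using
    norm_add_sq_eq_norm_sq_add_norm_sq_of_inner_eq_zero _ _ horth

end Submodule

namespace Real

theorem le_mul_iff_le_sqrt_one_add_sq_mul {a b c d : ℝ} (ha : 0 ≤ a) (hb : 0 ≤ b)
    (hc : 0 ≤ c) (hd : 0 ≤ d) (hcab : c ^ 2 = a ^ 2 + b ^ 2) :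
    b ≤ d * a ↔ c ≤ √(1 + d ^ 2) * a := by
  rw [← pow_le_pow_iff_left₀ hb (by positivity) two_ne_zero,
    ← pow_le_pow_iff_left₀ hc (by positivity) two_ne_zero, mul_pow, mul_pow,
    sq_sqrt (by positivity), hcab]
  constructor <;> intro h <;> linarith

variable {ι : Type*} {a c : ι → ℝ}

theorem one_le_of_isLeast_forall_le_mul (ha : ∀ i, 0 ≤ a i) (hac : ∀ i, a i ≤ c i) {C : ℝ}
    (hC : IsLeast {C | ∀ i, c i ≤ C * a i} C) : 1 ≤ C := by
  -- If `C < 1` then `a = c = 0`, so every real is admissible and there is no least one.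
  by_contra! hC1
  have hzero : ∀ i, a i = 0 ∧ c i = 0 := fun i => by
    have ha0 : a i = 0 := by nlinarith [hC.1 i, ha i, hac i]
    have hc0 : c i ≤ 0 := by simpa [ha0] using hC.1 i
    exact ⟨ha0, hc0.antisymm (ha0 ▸ hac i)⟩
  have hmem : C - 1 ∈ {C | ∀ i, c i ≤ C * a i} := fun i => by simp [hzero i]
  linarith [hC.2 hmem]

theorem eq_sqrt_one_add_sq_of_isLeast {b : ι → ℝ} (ha : ∀ i, 0 ≤ a i) (hb : ∀ i, 0 ≤ b i)
    (hc : ∀ i, 0 ≤ c i) (hcab : ∀ i, c i ^ 2 = a i ^ 2 + b i ^ 2) {δ C : ℝ}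
    (hδ : IsLeast {d | 0 ≤ d ∧ ∀ i, b i ≤ d * a i} δ)
    (hC : IsLeast {C | ∀ i, c i ≤ C * a i} C) :
    C = √(1 + δ ^ 2) := by
  have hiff : ∀ d, 0 ≤ d → ((∀ i, b i ≤ d * a i) ↔ ∀ i, c i ≤ √(1 + d ^ 2) * a i) :=
    fun d hd => forall_congr' fun i =>
      le_mul_iff_le_sqrt_one_add_sq_mul (ha i) (hb i) (hc i) hd (hcab i)
  have hC1 : 1 ≤ C := one_le_of_isLeast_forall_le_mul ha
    (fun i => le_of_sq_le_sq (by nlinarith [hcab i, sq_nonneg (b i)]) (hc i)) hC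
  refine le_antisymm (hC.2 ((hiff δ hδ.1.1).1 hδ.1.2)) ?_
  -- `C` itself is `√(1 + d²)` for `d = √(C² - 1)`, an admissible constant.
  have hd : (0 : ℝ) ≤ C ^ 2 - 1 := by nlinarith
  have hCeq : √(1 + √(C ^ 2 - 1) ^ 2) = C := by
    rw [sq_sqrt hd, add_sub_cancel, sqrt_sq (by linarith)]
  have hδle : δ ≤ √(C ^ 2 - 1) :=
    hδ.2 ⟨sqrt_nonneg _, (hiff _ (sqrt_nonneg _)).2 (by rw [hCeq]; exact hC.1)⟩
  calc √(1 + δ ^ 2) ≤ √(1 + √(C ^ 2 - 1) ^ 2) := by gcongr; exact hδ.1.1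
    _ = C := hCeq

end Real

theorem quasiOptimality_constant_eq_sqrt_one_add_deltaV_sq_general
    {X : Type*} [NormedAddCommGroup X] [InnerProductSpace ℝ X]
    (V S : Submodule ℝ X) [FiniteDimensional ℝ S]
    (P : V →ₗ[ℝ] X) (hrange : ∀ v : V, P v ∈ S)
    (δV : ℝ)
    (hδV : IsLeast {d : ℝ | 0 ≤ d ∧ ∀ v : V,
        ‖((S.orthogonalProjection (v : X) : X)) - P v‖ ≤
          d * ‖(v : X) - (S.orthogonalProjection (v : X) : X)‖} δV)
    (Cqopt : ℝ)
    (hCqopt : IsLeast {C : ℝ | ∀ v : V,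
        ‖(v : X) - P v‖ ≤ C * Metric.infDist (v : X) (S : Set X)} Cqopt) :
    Cqopt = Real.sqrt (1 + δV ^ 2) := by
  simp only [S.infDist_eq_norm_sub_starProjection] at hCqopt
  exact Real.eq_sqrt_one_add_sq_of_isLeast (fun _ => norm_nonneg _) (fun _ => norm_nonneg _)
    (fun _ => norm_nonneg _)
    (fun v => S.norm_sub_sq_eq_norm_sub_starProjection_sq_add _ (hrange v)) hδV hCqopt

/-- **Consistency mixed with stability.** Assume `P : V → X` (range in `S`) is
quasi-optimal, let `Π_S` be the orthogonal projection onto `S`, and let `δ_V ≥ 0`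
be the smallest constant with `‖Π_S v − P v‖ ≤ δ_V ‖v − Π_S v‖` for all `v ∈ V`.
Then the quasi-optimality constant satisfies `Cqopt = √(1 + δ_V²)`. -/
theorem quasiOptimality_constant_eq_sqrt_one_add_deltaV_sq
    {X : Type*} [NormedAddCommGroup X] [InnerProductSpace ℝ X] [CompleteSpace X]
    (V S : Submodule ℝ X) [CompleteSpace V] [FiniteDimensional ℝ S]
    (hSne : S ≠ ⊥) (hsum : V ⊔ S = ⊤)
    (P : V →ₗ[ℝ] X) (hrange : ∀ v : V, P v ∈ S)
    (hqo : ∃ C : ℝ, ∀ v : V, ‖(v : X) - P v‖ ≤ C * Metric.infDist (v : X) (S : Set X))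
    (δV : ℝ)
    (hδV : IsLeast {d : ℝ | 0 ≤ d ∧ ∀ v : V,
        ‖((S.orthogonalProjection (v : X) : X)) - P v‖ ≤
          d * ‖(v : X) - (S.orthogonalProjection (v : X) : X)‖} δV)
    (Cqopt : ℝ)
    (hCqopt : IsLeast {C : ℝ | ∀ v : V,
        ‖(v : X) - P v‖ ≤ C * Metric.infDist (v : X) (S : Set X)} Cqopt) :
    Cqopt = Real.sqrt (1 + δV ^ 2) :=
  quasiOptimality_constant_eq_sqrt_one_add_deltaV_sq_general V S P hrange δV hδV Cqopt hCqopt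
end

section
/- Equivalence of the two extensions: for a linear map P : V → S, the following are equivalent: (i) P extends to a bounded linear projection P̄ : X → X with range S (P̄ ∘ P̄ = P̄, P̄(X) = S, P̄|_V = P); (ii) there exists a bounded bilinear form β : X × S → ℝ (i.e. |β(x,σ)| ≤ K‖x‖‖σ‖ for some K) such that β(s,σ) = b(s,σ) for all s, σ ∈ S and β(v,σ) = b(P v, σ) for all v ∈ V, σ ∈ S. -/
/-!
A bounded projection `P̄` onto `S` yields `β x σ = b (P̄ x) σ`. Conversely, since `b` is
nondegenerate on the finite-dimensional `S`, it identifies `S` with its dual, so a bounded `β`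
is of the form `β x σ = b (T x) σ` for a unique bounded `T : X → S`; the extension properties of
`β` say exactly that `T` fixes `S` and agrees with `P` on `V`.
-/

namespace LinearMap

theorem isProj_iff_idempotent_and_range_eq {R M F : Type*} [Semiring R] [AddCommMonoid M]
    [Module R M] [FunLike F M M] (m : Submodule R M) (f : F) :
    IsProj m f ↔ (∀ x, f (f x) = f x) ∧ Set.range f = (m : Set M) := by
  constructor
  · intro h
    refine ⟨fun x => h.map_id _ (h.map_mem x), ?_⟩
    refine Set.Subset.antisymm (Set.range_subset_iff.2 h.map_mem) fun x hx => ?_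
    exact ⟨x, h.map_id x hx⟩
  · rintro ⟨hidem, hrange⟩
    refine ⟨fun x => ?_, fun x hx => ?_⟩
    · exact (Set.ext_iff.1 hrange (f x)).1 (Set.mem_range_self x)
    obtain ⟨y, rfl⟩ : x ∈ Set.range f := hrange ▸ hx
    exact hidem y

end LinearMap

section

variable {E F : Type*} [NormedAddCommGroup E] [NormedSpace ℝ E]
  [NormedAddCommGroup F] [NormedSpace ℝ F] [FiniteDimensional ℝ F]

theorem exists_bound_bilin_comp_of_finiteDimensional {G : Type*} [NormedAddCommGroup G]
    [NormedSpace ℝ G] [FiniteDimensional ℝ G] (b : F →ₗ[ℝ] G →ₗ[ℝ] ℝ) (Q : E →L[ℝ] F) :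
    ∃ K : ℝ, ∀ (x : E) (σ : G), |b (Q x) σ| ≤ K * ‖x‖ * ‖σ‖ := by
  let bc : F →L[ℝ] G →L[ℝ] ℝ :=
    LinearMap.toContinuousLinearMap (LinearMap.toContinuousLinearMap.toLinearMap ∘ₗ b)
  exact ⟨‖bc ∘L Q‖, fun x σ => (bc ∘L Q).le_opNorm₂ x σ⟩

theorem exists_continuousLinearMap_bilin_apply_eq (b : F →ₗ[ℝ] F →ₗ[ℝ] ℝ)
    (hb : b.SeparatingLeft) (β : E →ₗ[ℝ] F →ₗ[ℝ] ℝ)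
    (hβ : ∃ K : ℝ, ∀ (x : E) (σ : F), |β x σ| ≤ K * ‖x‖ * ‖σ‖) :
    ∃ T : E →L[ℝ] F, ∀ (x : E) (σ : F), b (T x) σ = β x σ := by
  obtain ⟨K, hK⟩ := hβ
  let βc : E →L[ℝ] F →L[ℝ] ℝ := β.mkContinuous₂ K hK
  let e : F ≃ₗ[ℝ] (F →L[ℝ] ℝ) :=
    (LinearMap.BilinForm.toDual b (.ofSeparatingLeft hb)).trans LinearMap.toContinuousLinearMap
  refine ⟨e.toContinuousLinearEquiv.symm.toContinuousLinearMap ∘L βc, fun x σ => ?_⟩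
  have he : ∀ φ : F →L[ℝ] ℝ, b (e.symm φ) σ = φ σ := fun φ => by
    rw [← LinearMap.BilinForm.toDual_def (.ofSeparatingLeft hb)]
    exact congrArg (· σ) (e.apply_symm_apply φ)
  exact he (βc x)

end

theorem extension_projection_iff_extension_bilinear_general
    {X : Type*} [NormedAddCommGroup X] [InnerProductSpace ℝ X]
    (V S : Submodule ℝ X) [FiniteDimensional ℝ S]
    (b : S →ₗ[ℝ] S →ₗ[ℝ] ℝ) (hb : ∀ s : S, (∀ σ : S, b s σ = 0) → s = 0)
    (P : V →ₗ[ℝ] S) :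
    (∃ Pbar : X →L[ℝ] X,
        (∀ x : X, Pbar (Pbar x) = Pbar x) ∧ Set.range Pbar = (S : Set X) ∧
          ∀ v : V, Pbar v = (P v : X)) ↔
      (∃ β : X →ₗ[ℝ] S →ₗ[ℝ] ℝ,
        (∃ K : ℝ, ∀ (x : X) (σ : S), |β x σ| ≤ K * ‖x‖ * ‖σ‖) ∧
          (∀ s σ : S, β (s : X) σ = b s σ) ∧
            ∀ (v : V) (σ : S), β (v : X) σ = b (P v) σ) := by
  constructor
  · rintro ⟨Pbar, hidem, hrange, hV⟩
    have hproj := (LinearMap.isProj_iff_idempotent_and_range_eq S Pbar).2 ⟨hidem, hrange⟩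
    let Q := Pbar.codRestrict S hproj.map_mem
    refine ⟨b ∘ₗ (Q : X →ₗ[ℝ] S), exists_bound_bilin_comp_of_finiteDimensional b Q,
      fun s σ => congrArg (b · σ) (Subtype.ext (hproj.map_id s s.2) : Q s = s),
      fun v σ => congrArg (b · σ) (Subtype.ext (hV v) : Q v = P v)⟩
  · rintro ⟨β, hβ, hβS, hβV⟩
    obtain ⟨T, hT⟩ := exists_continuousLinearMap_bilin_apply_eq b hb β hβ
    have hT_eq : ∀ (x : X) (s : S), (∀ σ, β x σ = b s σ) → T x = s := fun x s h =>
      sub_eq_zero.mp <| hb _ fun σ => by rw [map_sub, LinearMap.sub_apply, hT, h, sub_self]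
    have hproj : LinearMap.IsProj S (S.subtypeL ∘L T) :=
      ⟨fun x => (T x).2, fun x hx => congrArg Subtype.val (hT_eq x ⟨x, hx⟩ (hβS ⟨x, hx⟩))⟩
    obtain ⟨hidem, hrange⟩ := (LinearMap.isProj_iff_idempotent_and_range_eq _ _).1 hproj
    exact ⟨S.subtypeL ∘L T, hidem, hrange, fun v => congrArg Subtype.val (hT_eq v (P v) (hβV v))⟩

/-- **Equivalence of the two extensions.** For a linear map `P : V → S`, `P` extends to a
bounded linear projection `P̄ : X → X` with range `S` if and only if there exists a bounded
bilinear form `β : X × S → ℝ` extending both `b` and `(v,σ) ↦ b(P v, σ)`. -/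
theorem extension_projection_iff_extension_bilinear
    {X : Type*} [NormedAddCommGroup X] [InnerProductSpace ℝ X] [CompleteSpace X]
    (V S : Submodule ℝ X) [CompleteSpace V] [FiniteDimensional ℝ S]
    (hSne : S ≠ ⊥) (hsum : V ⊔ S = ⊤)
    (b : S →ₗ[ℝ] S →ₗ[ℝ] ℝ) (hb : ∀ s : S, (∀ σ : S, b s σ = 0) → s = 0)
    (P : V →ₗ[ℝ] S) :
    (∃ Pbar : X →L[ℝ] X,
        (∀ x : X, Pbar (Pbar x) = Pbar x) ∧ Set.range Pbar = (S : Set X) ∧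
          ∀ v : V, Pbar v = (P v : X)) ↔
      (∃ β : X →ₗ[ℝ] S →ₗ[ℝ] ℝ,
        (∃ K : ℝ, ∀ (x : X) (σ : S), |β x σ| ≤ K * ‖x‖ * ‖σ‖) ∧
          (∀ s σ : S, β (s : X) σ = b s σ) ∧
            ∀ (v : V) (σ : S), β (v : X) σ = b (P v) σ) :=
  extension_projection_iff_extension_bilinear_general V S b hb P
end

section
/- Norm of the extended approximation operator via the extended bilinear form: let P : V → S be linear and suppose there exists a bounded bilinear form β : X × S → ℝ with β(s,σ) = b(s,σ) for s, σ ∈ S and β(v,σ) = b(P v, σ) for v ∈ V, σ ∈ S, and let P̄ : X → X be the associated bounded linear projection onto S extending P. Then ‖P̄‖ = sup_{σ ∈ S, σ ≠ 0} [ (sup_{x ∈ X, ‖x‖ = 1} β(x,σ)) / (sup_{s ∈ S, ‖s‖ = 1} b(s,σ)) ], where ‖P̄‖ is the operator norm of P̄ on X. -/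
/-!
Both suprema in the ratio are operator norms: the denominator is the norm of the functional
`b(·, σ)` on `S`, and, since `β(x, σ) = b(P̄ x, σ)` (the two sides agree on `V` and on `S`), the
numerator is the norm of `b(·, σ) ∘ P̄`. Nondegeneracy in finite dimension makes `σ ↦ b(·, σ)` an
isomorphism of `S` onto its dual, so the right-hand side is `sup_{φ ≠ 0} ‖φ ∘ P̄‖ / ‖φ‖`, which is
`‖P̄‖` by Hahn–Banach.
-/

theorem LinearMap.SeparatingLeft.separatingRight {K V : Type*} [Field K] [AddCommGroup V]
    [Module K V] [FiniteDimensional K V] {B : LinearMap.BilinForm K V} (hB : B.SeparatingLeft) :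
    B.SeparatingRight := by
  have hinj : Function.Injective B :=
    LinearMap.ker_eq_bot.mp (LinearMap.separatingLeft_iff_ker_eq_bot.mp hB)
  have hsurj : Function.Surjective B :=
    (LinearMap.injective_iff_surjective_of_finrank_eq_finrank
      Subspace.dual_finrank_eq.symm).mp hinj
  intro y hy
  refine (Module.forall_dual_apply_eq_zero_iff K y).mp fun φ => ?_
  obtain ⟨x, rfl⟩ := hsurj φ
  exact hy x

theorem ContinuousLinearMap.sSup_apply_sphere_eq_opNorm {E : Type*} [NormedAddCommGroup E]
    [NormedSpace ℝ E] [Nontrivial E] (f : E →L[ℝ] ℝ) :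
    sSup {c : ℝ | ∃ x : E, ‖x‖ = 1 ∧ c = f x} = ‖f‖ := by
  have hle : ∀ x : E, ‖x‖ = 1 → f x ≤ ‖f‖ := fun x hx => by
    simpa [hx] using (le_abs_self (f x)).trans (f.le_opNorm x)
  obtain ⟨x₀, hx₀⟩ := exists_norm_eq E zero_le_one
  have hbdd : BddAbove {c : ℝ | ∃ x : E, ‖x‖ = 1 ∧ c = f x} :=
    ⟨‖f‖, fun _ ⟨x, hx, hc⟩ => hc ▸ hle x hx⟩
  refine le_antisymm (csSup_le ⟨f x₀, x₀, hx₀, rfl⟩ fun _ ⟨x, hx, hc⟩ => hc ▸ hle x hx) ?_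
  rw [← f.sSup_sphere_eq_norm]
  refine csSup_le ((NormedSpace.sphere_nonempty.mpr zero_le_one).image _) ?_
  rintro _ ⟨x, hx, rfl⟩
  rw [mem_sphere_zero_iff_norm] at hx
  -- `|f x|` is attained as `f x` or as `f (-x)`
  rcases abs_cases (f x) with ⟨habs, -⟩ | ⟨habs, -⟩ <;> simp only [Real.norm_eq_abs, habs]
  · exact le_csSup hbdd ⟨x, hx, rfl⟩
  · exact le_csSup hbdd ⟨-x, by rwa [norm_neg], by rw [map_neg]⟩

theorem ContinuousLinearMap.opNorm_eq_sSup_opNorm_comp_div {𝕜 X E : Type*} [RCLike 𝕜]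
    [NormedAddCommGroup X] [NormedSpace 𝕜 X] [NormedAddCommGroup E] [NormedSpace 𝕜 E]
    [Nontrivial E] (Q : X →L[𝕜] E) :
    ‖Q‖ = sSup {r : ℝ | ∃ φ : E →L[𝕜] 𝕜, φ ≠ 0 ∧ r = ‖φ.comp Q‖ / ‖φ‖} := by
  set R := {r : ℝ | ∃ φ : E →L[𝕜] 𝕜, φ ≠ 0 ∧ r = ‖φ.comp Q‖ / ‖φ‖}
  have hR : ∀ r ∈ R, r ≤ ‖Q‖ := by
    rintro _ ⟨φ, hφ, rfl⟩
    rw [div_le_iff₀ (norm_pos_iff.mpr hφ), mul_comm]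
    exact φ.opNorm_comp_le Q
  -- Hahn–Banach: a norming functional `φ` of `Q x` shows `‖Q x‖ ≤ (‖φ.comp Q‖ / ‖φ‖) * ‖x‖`.
  have hnorming : ∀ y : E, y ≠ 0 → ∃ φ : E →L[𝕜] 𝕜, φ ≠ 0 ∧ ‖φ‖ = 1 ∧ ‖φ y‖ = ‖y‖ := by
    intro y hy
    obtain ⟨φ, hφ, hφy⟩ := exists_dual_vector 𝕜 y (norm_ne_zero_iff.mpr hy)
    refine ⟨φ, ?_, hφ, by simp [hφy]⟩
    rintro rfl
    simp at hφ
  obtain ⟨y₀, hy₀⟩ := exists_ne (0 : E)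
  obtain ⟨φ₀, hφ₀, -⟩ := hnorming y₀ hy₀
  have hbdd : BddAbove R := ⟨‖Q‖, hR⟩
  have hnonneg : 0 ≤ sSup R := Real.sSup_nonneg fun _ ⟨φ, _, h⟩ => h ▸ by positivity
  refine le_antisymm (Q.opNorm_le_bound hnonneg fun x => ?_) (csSup_le ⟨_, φ₀, hφ₀, rfl⟩ hR)
  rcases eq_or_ne (Q x) 0 with hx | hx
  · rw [hx, norm_zero]
    positivity
  obtain ⟨φ, hφ, hφ1, hφx⟩ := hnorming (Q x) hx
  calc ‖Q x‖ = ‖φ.comp Q x‖ := hφx.symm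
    _ ≤ ‖φ.comp Q‖ / ‖φ‖ * ‖x‖ := by rw [hφ1, div_one]; exact (φ.comp Q).le_opNorm x
    _ ≤ sSup R * ‖x‖ := by gcongr; exact le_csSup hbdd ⟨φ, hφ, rfl⟩

theorem norm_extended_projection_eq_sup_ratio_general
    {X : Type*} [NormedAddCommGroup X] [InnerProductSpace ℝ X]
    (V S : Submodule ℝ X) [FiniteDimensional ℝ S]
    (hSne : S ≠ ⊥) (hsum : V ⊔ S = ⊤)
    (b : S →ₗ[ℝ] S →ₗ[ℝ] ℝ) (hb : ∀ s : S, (∀ σ : S, b s σ = 0) → s = 0)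
    (P : V →ₗ[ℝ] S)
    (β : X →ₗ[ℝ] S →ₗ[ℝ] ℝ)
    (hβS : ∀ s σ : S, β (s : X) σ = b s σ)
    (hβV : ∀ (v : V) (σ : S), β (v : X) σ = b (P v) σ)
    (Pbar : X →L[ℝ] X)
    (hproj : ∀ x : X, Pbar (Pbar x) = Pbar x)
    (hrangebar : Set.range Pbar = (S : Set X))
    (hext : ∀ v : V, Pbar v = (P v : X)) :
    ‖Pbar‖ = sSup {r : ℝ | ∃ σ : S, σ ≠ 0 ∧
        r = sSup {c : ℝ | ∃ x : X, ‖x‖ = 1 ∧ c = β x σ} /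
          sSup {c : ℝ | ∃ s : S, ‖s‖ = 1 ∧ c = b s σ}} := by
  have : Nontrivial S := Submodule.nontrivial_iff_ne_bot.mpr hSne
  let Q : X →L[ℝ] S := Pbar.codRestrict S fun x => by
    rw [← SetLike.mem_coe, ← hrangebar]; exact Set.mem_range_self x
  have hQ : ‖Q‖ = ‖Pbar‖ := Q.opNorm_ext Pbar fun _ => rfl
  have hβQ : β = b ∘ₗ (Q : X →ₗ[ℝ] S) := by
    refine LinearMap.ext_on_codisjoint (codisjoint_iff.mpr hsum) (fun v hv => ?_) fun s hs => ?_
    · have hQv : Q v = P ⟨v, hv⟩ := Subtype.ext (hext ⟨v, hv⟩)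
      exact LinearMap.ext fun σ => by simp [hQv, ← hβV ⟨v, hv⟩ σ]
    · obtain ⟨y, rfl⟩ : s ∈ Set.range Pbar := hrangebar ▸ hs
      have hQs : Q (Pbar y) = ⟨Pbar y, hs⟩ := Subtype.ext (hproj y)
      exact LinearMap.ext fun σ => by simp [hQs, ← hβS ⟨Pbar y, hs⟩ σ]
  let e : S ≃ₗ[ℝ] (S →L[ℝ] ℝ) :=
    (LinearMap.BilinForm.toDual b.flip ⟨LinearMap.SeparatingLeft.separatingRight hb, hb⟩).trans
      LinearMap.toContinuousLinearMap
  have he : ∀ σ s : S, e σ s = b s σ := fun _ _ => rfl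
  have hnum : ∀ σ : S, sSup {c : ℝ | ∃ x : X, ‖x‖ = 1 ∧ c = β x σ} = ‖(e σ).comp Q‖ := by
    intro σ
    have : Nontrivial X := S.subtype_injective.nontrivial
    simpa [hβQ, he] using ((e σ).comp Q).sSup_apply_sphere_eq_opNorm
  have hden : ∀ σ : S, sSup {c : ℝ | ∃ s : S, ‖s‖ = 1 ∧ c = b s σ} = ‖e σ‖ :=
    fun σ => by simpa [he] using (e σ).sSup_apply_sphere_eq_opNorm
  rw [← hQ, Q.opNorm_eq_sSup_opNorm_comp_div]
  congr 1
  ext r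
  simp only [Set.mem_ofPred_eq, hnum, hden]
  exact ⟨fun ⟨φ, hφ, hr⟩ => ⟨e.symm φ, by simpa using hφ, by simpa using hr⟩,
    fun ⟨σ, hσ, hr⟩ => ⟨e σ, by simpa using hσ, hr⟩⟩

/-- **Norms of extensions.** Let `P : V → S` be linear, `β : X × S → ℝ` a bounded common
extension of `b` and `(v,σ) ↦ b(P v, σ)`, and `P̄ : X → X` the associated bounded linear
projection onto `S` extending `P`. Then
`‖P̄‖ = sup_{σ ≠ 0} (sup_{‖x‖=1} β(x,σ)) / (sup_{‖s‖=1} b(s,σ))`. -/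
theorem norm_extended_projection_eq_sup_ratio
    {X : Type*} [NormedAddCommGroup X] [InnerProductSpace ℝ X] [CompleteSpace X]
    (V S : Submodule ℝ X) [CompleteSpace V] [FiniteDimensional ℝ S]
    (hSne : S ≠ ⊥) (hsum : V ⊔ S = ⊤)
    (b : S →ₗ[ℝ] S →ₗ[ℝ] ℝ) (hb : ∀ s : S, (∀ σ : S, b s σ = 0) → s = 0)
    (P : V →ₗ[ℝ] S)
    (β : X →ₗ[ℝ] S →ₗ[ℝ] ℝ)
    (hβbdd : ∃ K : ℝ, ∀ (x : X) (σ : S), |β x σ| ≤ K * ‖x‖ * ‖σ‖)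
    (hβS : ∀ s σ : S, β (s : X) σ = b s σ)
    (hβV : ∀ (v : V) (σ : S), β (v : X) σ = b (P v) σ)
    (Pbar : X →L[ℝ] X)
    (hproj : ∀ x : X, Pbar (Pbar x) = Pbar x)
    (hrangebar : Set.range Pbar = (S : Set X))
    (hext : ∀ v : V, Pbar v = (P v : X)) :
    ‖Pbar‖ = sSup {r : ℝ | ∃ σ : S, σ ≠ 0 ∧
        r = sSup {c : ℝ | ∃ x : X, ‖x‖ = 1 ∧ c = β x σ} /
          sSup {c : ℝ | ∃ s : S, ‖s‖ = 1 ∧ c = b s σ}} :=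
  norm_extended_projection_eq_sup_ratio_general V S hSne hsum b hb P β hβS hβV Pbar hproj hrangebar
    hext
end

section
/- Stability constant of a method with smoother: for every bounded linear functional ℓ : V → ℝ there is a unique element Mℓ ∈ S with b(Mℓ, σ) = ℓ(E σ) for all σ ∈ S, the map ℓ ↦ Mℓ is linear and bounded, and its operator norm satisfies sup_{ℓ ≠ 0} ‖Mℓ‖ / ‖ℓ‖_{V'} = sup_{σ ∈ S, σ ≠ 0} ‖E σ‖ / ‖b(·,σ)‖_{S'}, where ‖ℓ‖_{V'} := sup_{v ∈ V, ‖v‖ = 1} ℓ(v) and ‖b(·,σ)‖_{S'} := sup_{s ∈ S, ‖s‖ = 1} b(s,σ). -/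
/-- The sup of the values of a continuous linear functional on the unit sphere of a
nontrivial real normed space equals its operator norm. -/
lemma aux_sSup_sphere {S : Type*} [NormedAddCommGroup S] [NormedSpace ℝ S]
    (hS : ∃ x : S, x ≠ 0) (f : S →L[ℝ] ℝ) :
    sSup {c : ℝ | ∃ s : S, ‖s‖ = 1 ∧ c = f s} = ‖f‖ := by
  set D := {c : ℝ | ∃ s : S, ‖s‖ = 1 ∧ c = f s} with hDdef
  obtain ⟨x, hx⟩ := hS
  have hunit : ∀ y : S, y ≠ 0 → ‖(‖y‖⁻¹ • y)‖ = 1 := by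
    intro y hy
    rw [norm_smul, norm_inv, norm_norm, inv_mul_cancel₀ (norm_ne_zero_iff.mpr hy)]
  have hne : D.Nonempty := ⟨f (‖x‖⁻¹ • x), _, hunit x hx, rfl⟩
  have hub : ∀ c ∈ D, c ≤ ‖f‖ := by
    rintro c ⟨s, hs, rfl⟩
    calc f s ≤ |f s| := le_abs_self _
    _ ≤ ‖f‖ * ‖s‖ := f.le_opNorm s
    _ = ‖f‖ := by rw [hs, mul_one]
  have hbdd : BddAbove D := ⟨‖f‖, hub⟩
  refine le_antisymm (csSup_le hne hub) ?_
  have habs : ∀ y : S, y ≠ 0 → |f (‖y‖⁻¹ • y)| ≤ sSup D := by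
    intro y hy
    have h1 : f (‖y‖⁻¹ • y) ≤ sSup D := le_csSup hbdd ⟨_, hunit y hy, rfl⟩
    have h2 : f (-(‖y‖⁻¹ • y)) ≤ sSup D :=
      le_csSup hbdd ⟨_, by rw [norm_neg]; exact hunit y hy, rfl⟩
    rw [map_neg] at h2
    exact abs_le.mpr ⟨by linarith, h1⟩
  refine f.opNorm_le_bound (le_trans (abs_nonneg _) (habs x hx)) ?_
  intro y
  rcases eq_or_ne y 0 with rfl | hy
  · simp
  · have hyn : (0 : ℝ) < ‖y‖ := norm_pos_iff.mpr hy
    have hval : f (‖y‖⁻¹ • y) = ‖y‖⁻¹ * f y := by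
      rw [map_smul]; simp
    have hkey : ‖f y‖ = ‖y‖ * |f (‖y‖⁻¹ • y)| := by
      rw [hval, abs_mul, abs_inv, abs_norm, Real.norm_eq_abs]
      field_simp
    rw [hkey, mul_comm]
    exact mul_le_mul_of_nonneg_right (habs y hy) (le_of_lt hyn)

/-- A continuous linear map (as a plain linear map) between real normed spaces is bounded. -/
lemma aux_bound {E F : Type*} [NormedAddCommGroup E] [NormedSpace ℝ E]
    [NormedAddCommGroup F] [NormedSpace ℝ F] (f : E →ₗ[ℝ] F) (hf : Continuous f) :
    ∃ C : ℝ, 0 ≤ C ∧ ∀ x : E, ‖f x‖ ≤ C * ‖x‖ := by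
  obtain ⟨C, hC, h⟩ := SemilinearMapClass.bound_of_continuous (σ₁₂ := RingHom.id ℝ) f hf
  exact ⟨C, hC.le, h⟩

set_option maxHeartbeats 4000000 in
set_option synthInstance.maxHeartbeats 400000 in
/-- **Stability constant of a method with smoother.** For every bounded linear functional
`ℓ : V → ℝ` there is a unique `Mℓ ∈ S` with `b(Mℓ, σ) = ℓ(E σ)` for all `σ ∈ S`; the map
`ℓ ↦ Mℓ` is linear and bounded, and its operator norm satisfies
`sup_{ℓ ≠ 0} ‖Mℓ‖/‖ℓ‖_{V'} = sup_{σ ≠ 0} ‖E σ‖ / ‖b(·,σ)‖_{S'}`. -/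
theorem stability_constant_with_smoother
    {X : Type*} [NormedAddCommGroup X] [InnerProductSpace ℝ X] [CompleteSpace X]
    (V S : Submodule ℝ X) [CompleteSpace V] [FiniteDimensional ℝ S]
    (hSne : S ≠ ⊥)
    (b : S →ₗ[ℝ] S →ₗ[ℝ] ℝ) (hb : ∀ s : S, (∀ σ : S, b s σ = 0) → s = 0)
    (E : S →ₗ[ℝ] V) :
    ∃ M : (V →L[ℝ] ℝ) →ₗ[ℝ] S,
      (∀ ℓ : V →L[ℝ] ℝ,
        (∀ σ : S, b (M ℓ) σ = ℓ (E σ)) ∧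
          ∀ m : S, (∀ σ : S, b m σ = ℓ (E σ)) → m = M ℓ) ∧
      (∃ K : ℝ, ∀ ℓ : V →L[ℝ] ℝ, ‖M ℓ‖ ≤ K * ‖ℓ‖) ∧
      sSup {r : ℝ | ∃ ℓ : V →L[ℝ] ℝ, ℓ ≠ 0 ∧ r = ‖M ℓ‖ / ‖ℓ‖} =
        sSup {r : ℝ | ∃ σ : S, σ ≠ 0 ∧
          r = ‖E σ‖ / sSup {c : ℝ | ∃ s : S, ‖s‖ = 1 ∧ c = b s σ}} := by
  classical
  -- a nonzero element of S
  obtain ⟨x0, hx0S, hx0⟩ := Submodule.exists_mem_ne_zero_of_ne_bot hSne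
  have hSx : ∃ x : S, x ≠ 0 := ⟨⟨x0, hx0S⟩, fun h => hx0 (congrArg Subtype.val h)⟩
  -- finite dimensionality of the continuous dual of S
  haveI hfd : FiniteDimensional ℝ (S →L[ℝ] ℝ) :=
    (LinearMap.toContinuousLinearMap :
      (S →ₗ[ℝ] ℝ) ≃ₗ[ℝ] (S →L[ℝ] ℝ)).finiteDimensional
  have hfr : Module.finrank ℝ S = Module.finrank ℝ (S →L[ℝ] ℝ) := by
    rw [← (LinearMap.toContinuousLinearMap :
      (S →ₗ[ℝ] ℝ) ≃ₗ[ℝ] (S →L[ℝ] ℝ)).finrank_eq]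
    exact (Subspace.dual_finrank_eq (K := ℝ) (V := S)).symm
  -- b as a map into the continuous dual
  set b' : S →ₗ[ℝ] (S →L[ℝ] ℝ) :=
    (LinearMap.toContinuousLinearMap :
      (S →ₗ[ℝ] ℝ) ≃ₗ[ℝ] (S →L[ℝ] ℝ)).toLinearMap ∘ₗ b with hb'def
  have hb'app : ∀ s σ : S, b' s σ = b s σ := by
    intro s σ
    simp [hb'def, LinearMap.coe_toContinuousLinearMap']
  have hb'inj : Function.Injective b' := by
    rw [← LinearMap.ker_eq_bot, LinearMap.ker_eq_bot']
    intro s hs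
    refine hb s fun σ => ?_
    rw [← hb'app, hs]
    rfl
  set e : S ≃ₗ[ℝ] (S →L[ℝ] ℝ) := b'.linearEquivOfInjective hb'inj hfr with hedef
  have heapp : ∀ s σ : S, e s σ = b s σ := by
    intro s σ
    rw [hedef, LinearMap.linearEquivOfInjective_apply, hb'app]
  -- flip of b as a map into the continuous dual
  set b'' : S →ₗ[ℝ] (S →L[ℝ] ℝ) :=
    (LinearMap.toContinuousLinearMap :
      (S →ₗ[ℝ] ℝ) ≃ₗ[ℝ] (S →L[ℝ] ℝ)).toLinearMap ∘ₗ b.flip with hb''def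
  have hb''app : ∀ σ s : S, b'' σ s = b s σ := by
    intro σ s
    simp [hb''def, LinearMap.coe_toContinuousLinearMap']
  have hb''inj : Function.Injective b'' := by
    rw [← LinearMap.ker_eq_bot, LinearMap.ker_eq_bot']
    intro σ hσ
    have hall : ∀ s : S, b s σ = 0 := by
      intro s; rw [← hb''app, hσ]; rfl
    obtain ⟨s, hs⟩ := e.surjective (innerSL ℝ σ)
    have h1 : (innerSL ℝ σ) σ = 0 := by
      rw [← hs, heapp]; exact hall s
    have h2 : ‖σ‖ ^ 2 = 0 := by
      rw [← real_inner_self_eq_norm_sq]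
      simpa using h1
    exact norm_eq_zero.mp (pow_eq_zero_iff two_ne_zero |>.mp h2)
  set e2 : S ≃ₗ[ℝ] (S →L[ℝ] ℝ) := b''.linearEquivOfInjective hb''inj hfr with he2def
  have he2app : ∀ σ s : S, e2 σ s = b s σ := by
    intro σ s
    rw [he2def, LinearMap.linearEquivOfInjective_apply, hb''app]
  -- E as a continuous linear map
  set E' : S →L[ℝ] V := LinearMap.toContinuousLinearMap E with hE'def
  have hE'app : ∀ σ : S, E' σ = E σ := fun σ => by
    rw [hE'def, LinearMap.coe_toContinuousLinearMap']
  -- the composition map T : ℓ ↦ ℓ ∘ E'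
  set T : (V →L[ℝ] ℝ) →L[ℝ] (S →L[ℝ] ℝ) :=
    (ContinuousLinearMap.compL ℝ S V ℝ).flip E' with hTdef
  have hTcomp : ∀ ℓ : V →L[ℝ] ℝ, T ℓ = ℓ.comp E' := by
    intro ℓ
    rw [hTdef]
    simp [ContinuousLinearMap.flip_apply, ContinuousLinearMap.compL_apply]
  have hTapp : ∀ (ℓ : V →L[ℝ] ℝ) (σ : S), T ℓ σ = ℓ (E σ) := by
    intro ℓ σ
    rw [hTcomp, ContinuousLinearMap.comp_apply, hE'app]
  -- the solution operator M
  set M : (V →L[ℝ] ℝ) →ₗ[ℝ] S := e.symm.toLinearMap ∘ₗ T.toLinearMap with hMdef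
  have hMapp : ∀ (ℓ : V →L[ℝ] ℝ) (σ : S), b (M ℓ) σ = ℓ (E σ) := by
    intro ℓ σ
    have h1 : e (M ℓ) = T ℓ := by
      rw [hMdef]; exact e.apply_symm_apply (T ℓ)
    rw [← heapp, h1, hTapp]
  -- boundedness of M
  have hKex : ∃ K : ℝ, 0 ≤ K ∧ ∀ ℓ : V →L[ℝ] ℝ, ‖M ℓ‖ ≤ K * ‖ℓ‖ := by
    have hMcont : Continuous M := by
      have hcoe : ⇑M = (⇑e.symm.toLinearMap) ∘ (⇑T) := by rw [hMdef]; rfl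
      rw [hcoe]
      exact (e.symm.toLinearMap.continuous_of_finiteDimensional).comp T.continuous
    exact aux_bound (E := V →L[ℝ] ℝ) (F := S) M hMcont
  obtain ⟨K, hK0, hK⟩ := hKex
  have hpos1 : ∀ ℓ : V →L[ℝ] ℝ, ℓ ≠ 0 → (0 : ℝ) < ‖ℓ‖ := fun ℓ hℓ =>
    lt_of_le_of_ne (ContinuousLinearMap.opNorm_nonneg _)
      (Ne.symm fun h0 => hℓ ((ContinuousLinearMap.opNorm_zero_iff _).mp h0))
  refine ⟨M, ?_, ⟨K, hK⟩, ?_⟩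
  · -- existence and uniqueness
    intro ℓ
    refine ⟨hMapp ℓ, ?_⟩
    intro m hm
    have hdiff : ∀ σ : S, b (m - M ℓ) σ = 0 := by
      intro σ
      rw [map_sub, LinearMap.sub_apply, hm σ, hMapp ℓ σ, sub_self]
    exact sub_eq_zero.mp (hb _ hdiff)
  · -- the sup equality
    have hβeq : ∀ σ : S,
        sSup {c : ℝ | ∃ s : S, ‖s‖ = 1 ∧ c = b s σ} = ‖e2 σ‖ := by
      intro σ
      have hset : {c : ℝ | ∃ s : S, ‖s‖ = 1 ∧ c = b s σ}
          = {c : ℝ | ∃ s : S, ‖s‖ = 1 ∧ c = e2 σ s} := by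
        ext c
        constructor
        · rintro ⟨s, hs, rfl⟩; exact ⟨s, hs, (he2app σ s).symm⟩
        · rintro ⟨s, hs, rfl⟩; exact ⟨s, hs, he2app σ s⟩
      rw [hset]
      exact aux_sSup_sphere hSx (e2 σ)
    simp only [hβeq]
    set A := {r : ℝ | ∃ ℓ : V →L[ℝ] ℝ, ℓ ≠ 0 ∧ r = ‖M ℓ‖ / ‖ℓ‖} with hAdef
    set B := {r : ℝ | ∃ σ : S, σ ≠ 0 ∧ r = ‖E σ‖ / ‖e2 σ‖} with hBdef
    have hβpos : ∀ σ : S, σ ≠ 0 → (0 : ℝ) < ‖e2 σ‖ := by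
      intro σ hσ
      have hne0 : e2 σ ≠ 0 := fun h0 => hσ (e2.map_eq_zero_iff.mp h0)
      exact lt_of_le_of_ne (ContinuousLinearMap.opNorm_nonneg _)
        (Ne.symm fun h0 => hne0 ((ContinuousLinearMap.opNorm_zero_iff _).mp h0))
    have hb2 : ∀ (ℓ : V →L[ℝ] ℝ) (σ : S), e2 σ (M ℓ) = ℓ (E σ) := by
      intro ℓ σ
      rw [he2app, hMapp]
    -- direction (ii): from σ with E σ ≠ 0 produce a functional
    have hii : ∀ σ : S, σ ≠ 0 → E σ ≠ 0 → ∃ ℓ : V →L[ℝ] ℝ, ℓ ≠ 0 ∧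
        ‖E σ‖ / ‖e2 σ‖ ≤ ‖M ℓ‖ / ‖ℓ‖ := by
      intro σ hσ hEσ
      set ℓ : V →L[ℝ] ℝ := innerSL ℝ (E σ) with hldef
      have hlE : ℓ (E σ) = ‖E σ‖ ^ 2 := by
        rw [hldef, innerSL_apply_apply]
        exact real_inner_self_eq_norm_sq (E σ)
      have hlnorm : ‖ℓ‖ = ‖E σ‖ := by
        rw [hldef]; exact innerSL_apply_norm ℝ (E σ)
      have hEpos : (0 : ℝ) < ‖E σ‖ := norm_pos_iff.mpr hEσ
      have hlne : ℓ ≠ 0 := by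
        intro h
        have h0 : ℓ (E σ) = 0 := by rw [h]; rfl
        rw [hlE] at h0
        exact hEσ (norm_eq_zero.mp (pow_eq_zero_iff two_ne_zero |>.mp h0))
      refine ⟨ℓ, hlne, ?_⟩
      rw [hlnorm, div_le_div_iff₀ (hβpos σ hσ) hEpos]
      have h1 : ‖E σ‖ ^ 2 = e2 σ (M ℓ) := by rw [hb2, hlE]
      have h2 : e2 σ (M ℓ) ≤ ‖e2 σ‖ * ‖M ℓ‖ := by
        refine (le_abs_self _).trans ?_
        rw [← Real.norm_eq_abs]
        exact (e2 σ).le_opNorm _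
      nlinarith [h1, h2]
    -- direction (i): from ℓ with M ℓ ≠ 0 produce a σ
    have hi : ∀ ℓ : V →L[ℝ] ℝ, ℓ ≠ 0 → M ℓ ≠ 0 → ∃ σ : S, σ ≠ 0 ∧
        ‖M ℓ‖ / ‖ℓ‖ ≤ ‖E σ‖ / ‖e2 σ‖ := by
      intro ℓ hℓ hMℓ
      set σ : S := e2.symm (innerSL ℝ (M ℓ)) with hσdef
      have he2σ : e2 σ = innerSL ℝ (M ℓ) := by
        rw [hσdef]; exact e2.apply_symm_apply _
      have hσne : σ ≠ 0 := by
        intro h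
        have hz : e2 (0 : S) = 0 := e2.map_eq_zero_iff.mpr rfl
        have h1 : innerSL ℝ (M ℓ) = 0 := by rw [← he2σ, h]; exact hz
        have h2 : ‖M ℓ‖ ^ 2 = 0 := by
          rw [← real_inner_self_eq_norm_sq, ← innerSL_apply_apply (𝕜 := ℝ), h1]
          rfl
        exact hMℓ (norm_eq_zero.mp (pow_eq_zero_iff two_ne_zero |>.mp h2))
      refine ⟨σ, hσne, ?_⟩
      have hnσ : ‖e2 σ‖ = ‖M ℓ‖ := by rw [he2σ]; exact innerSL_apply_norm ℝ (M ℓ)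
      have hMpos : (0 : ℝ) < ‖M ℓ‖ := norm_pos_iff.mpr hMℓ
      have hℓpos : (0 : ℝ) < ‖ℓ‖ := hpos1 ℓ hℓ
      rw [hnσ, div_le_div_iff₀ hℓpos hMpos]
      have h1 : ℓ (E σ) = ‖M ℓ‖ ^ 2 := by
        rw [← hb2 ℓ σ, he2σ, innerSL_apply_apply]
        exact real_inner_self_eq_norm_sq (M ℓ)
      have h2 : ℓ (E σ) ≤ ‖ℓ‖ * ‖E σ‖ := by
        refine (le_abs_self _).trans ?_
        rw [← Real.norm_eq_abs]
        exact ℓ.le_opNorm _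
      nlinarith [h1, h2]
    -- nonemptiness and bounds
    have hBne : B.Nonempty := by
      obtain ⟨x, hx⟩ := hSx
      exact ⟨‖E x‖ / ‖e2 x‖, x, hx, rfl⟩
    have hBnonneg : ∀ r ∈ B, (0 : ℝ) ≤ r := by
      rintro r ⟨σ, hσ, rfl⟩
      exact div_nonneg (norm_nonneg _) (ContinuousLinearMap.opNorm_nonneg _)
    have hAnonneg : ∀ r ∈ A, (0 : ℝ) ≤ r := by
      rintro r ⟨ℓ, hℓ, rfl⟩
      exact div_nonneg (norm_nonneg _) (ContinuousLinearMap.opNorm_nonneg _)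
    have hAbdd : BddAbove A := by
      refine ⟨K, ?_⟩
      rintro r ⟨ℓ, hℓ, rfl⟩
      exact (div_le_iff₀ (hpos1 ℓ hℓ)).mpr (hK ℓ)
    have hBbdd : BddAbove B := by
      refine ⟨K, ?_⟩
      rintro r ⟨σ, hσ, rfl⟩
      rcases eq_or_ne (E σ) 0 with hE0 | hE0
      · rw [hE0, norm_zero, zero_div]; exact hK0
      · obtain ⟨ℓ, hℓ, hle⟩ := hii σ hσ hE0
        exact hle.trans ((div_le_iff₀ (hpos1 ℓ hℓ)).mpr (hK ℓ))
    rcases Set.eq_empty_or_nonempty A with hAe | hAne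
    · -- no nonzero functionals : both sides are 0
      have hallE : ∀ σ : S, σ ≠ 0 → E σ = 0 := by
        intro σ hσ
        by_contra hE0
        obtain ⟨ℓ, hℓ, -⟩ := hii σ hσ hE0
        exact Set.eq_empty_iff_forall_notMem.mp hAe _ ⟨ℓ, hℓ, rfl⟩
      have hB0 : B = {0} := by
        apply Set.eq_singleton_iff_unique_mem.mpr
        constructor
        · obtain ⟨x, hx⟩ := hSx
          exact ⟨x, hx, by rw [hallE x hx, norm_zero, zero_div]⟩
        · rintro r ⟨σ, hσ, rfl⟩
          rw [hallE σ hσ, norm_zero, zero_div]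
      rw [hAe, hB0, Real.sSup_empty, csSup_singleton]
    · -- generic case
      apply le_antisymm
      · apply csSup_le hAne
        rintro r ⟨ℓ, hℓ, rfl⟩
        rcases eq_or_ne (M ℓ) 0 with hM0 | hM0
        · rw [hM0, norm_zero, zero_div]
          obtain ⟨r', hr'⟩ := hBne
          exact le_trans (hBnonneg r' hr') (le_csSup hBbdd hr')
        · obtain ⟨σ, hσ, hle⟩ := hi ℓ hℓ hM0
          exact hle.trans (le_csSup hBbdd ⟨σ, hσ, rfl⟩)
      · apply csSup_le hBne
        rintro r ⟨σ, hσ, rfl⟩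
        rcases eq_or_ne (E σ) 0 with hE0 | hE0
        · rw [hE0, norm_zero, zero_div]
          obtain ⟨r', hr'⟩ := hAne
          exact le_trans (hAnonneg r' hr') (le_csSup hAbdd hr')
        · obtain ⟨ℓ, hℓ, hle⟩ := hii σ hσ hE0
          exact hle.trans (le_csSup hAbdd ⟨ℓ, hℓ, rfl⟩)
end

section
/- Quasi-optimality and smoothing (characterization): let P : V → S be the linear map determined by b(P v, σ) = ⟪v, E σ⟫ for all v ∈ V and σ ∈ S. Then P is quasi-optimal, i.e. there exists C with ‖v − P v‖ ≤ C · dist(v,S) for all v ∈ V, if and only if b(u, σ) = ⟪u, E σ⟫ for all u ∈ S ∩ V and all σ ∈ S. -/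
open scoped RealInnerProductSpace
open Filter Topology

/-- **Quasi-optimality and smoothing (characterization).** Let `P : V → S` be the linear
map determined by `b(P v, σ) = ⟪v, E σ⟫` for all `v ∈ V`, `σ ∈ S`. Then `P` is
quasi-optimal if and only if `b(u, σ) = ⟪u, E σ⟫` for all `u ∈ S ∩ V` and all `σ ∈ S`. -/
theorem quasiOptimal_iff_consistency_with_smoother
    {X : Type*} [NormedAddCommGroup X] [InnerProductSpace ℝ X] [CompleteSpace X]
    (V S : Submodule ℝ X) [CompleteSpace V] [FiniteDimensional ℝ S]
    (hSne : S ≠ ⊥) (hsum : V ⊔ S = ⊤)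
    (b : S →ₗ[ℝ] S →ₗ[ℝ] ℝ) (hb : ∀ s : S, (∀ σ : S, b s σ = 0) → s = 0)
    (E : S →ₗ[ℝ] V)
    (P : V →ₗ[ℝ] S)
    (hP : ∀ (v : V) (σ : S), b (P v) σ = ⟪(v : X), ((E σ : V) : X)⟫) :
    (∃ C : ℝ, ∀ v : V, ‖(v : X) - (P v : X)‖ ≤ C * Metric.infDist (v : X) (S : Set X)) ↔
      ∀ u : S, (u : X) ∈ V → ∀ σ : S, b u σ = ⟪(u : X), ((E σ : V) : X)⟫ := by
  constructor
  · rintro ⟨C, hC⟩ u hu σ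
    have h0 : Metric.infDist ((u : X)) (S : Set X) = 0 :=
      Metric.infDist_zero_of_mem u.2
    have h1 := hC ⟨(u : X), hu⟩
    rw [h0, mul_zero] at h1
    have h2 : ((u : X)) - ((P ⟨(u : X), hu⟩ : S) : X) = 0 := by
      have := le_antisymm h1 (norm_nonneg _)
      simpa [norm_eq_zero] using this
    have hPu : P ⟨(u : X), hu⟩ = u := by
      apply Subtype.ext
      exact (sub_eq_zero.mp h2).symm
    have := hP ⟨(u : X), hu⟩ σ
    rw [hPu] at this
    exact this
  · intro hcons
    -- P fixes S ∩ V
    have hfix : ∀ (u : S) (hu : (u : X) ∈ V), P ⟨(u : X), hu⟩ = u := by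
      intro u hu
      have hz : ∀ σ : S, b (P ⟨(u : X), hu⟩ - u) σ = 0 := by
        intro σ
        simp [map_sub, hP ⟨(u : X), hu⟩ σ, hcons u hu σ]
      exact sub_eq_zero.mp (hb _ hz)
    -- P is continuous (closed graph theorem)
    have hcont : Continuous P := by
      apply P.continuous_of_seq_closed_graph
      intro w x y hw hPw
      have key : ∀ σ : S, b y σ = b (P x) σ := by
        intro σ
        have hbc : Continuous fun s : S => b s σ :=
          (LinearMap.continuous_of_finiteDimensional (b.flip σ))
        have h1 : Tendsto (fun n => b (P (w n)) σ) atTop (𝓝 (b y σ)) :=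
          (hbc.tendsto y).comp hPw
        have hg : Continuous fun z : V => ⟪(z : X), ((E σ : V) : X)⟫ :=
          continuous_subtype_val.inner continuous_const
        have h2 : Tendsto (fun n => ⟪((w n : V) : X), ((E σ : V) : X)⟫) atTop
            (𝓝 ⟪(x : X), ((E σ : V) : X)⟫) := (hg.tendsto x).comp hw
        have he : (fun n => b (P (w n)) σ)
            = fun n => ⟪((w n : V) : X), ((E σ : V) : X)⟫ :=
          funext fun n => hP (w n) σ
        rw [he] at h1
        rw [hP x σ]
        exact tendsto_nhds_unique h1 h2
      have hz : ∀ σ : S, b (y - P x) σ = 0 := by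
        intro σ; simp [map_sub, key σ]
      exact sub_eq_zero.mp (hb _ hz)
    let Pc : V →L[ℝ] S := ⟨P, hcont⟩
    -- open mapping constant for the sum map V × S → X
    have hcS : CompleteSpace S := FiniteDimensional.complete ℝ S
    let f : V × S →L[ℝ] X := (V.subtypeL).coprod (S.subtypeL)
    have hsurj : Function.Surjective f := by
      intro x
      have hx : x ∈ V ⊔ S := by rw [hsum]; trivial
      obtain ⟨v, hv, s, hs, h⟩ := Submodule.mem_sup.mp hx
      exact ⟨(⟨v, hv⟩, ⟨s, hs⟩), h⟩
    obtain ⟨c, hc0, hc⟩ := ContinuousLinearMap.exists_preimage_norm_le f hsurj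
    set K := ‖Pc‖ with hK
    have hK0 : 0 ≤ K := hK ▸ norm_nonneg Pc
    have hCpos : 0 < (1 + K) * c := mul_pos (by linarith) hc0
    refine ⟨(1 + K) * c, ?_⟩
    intro v
    -- main estimate against any s ∈ S
    have main : ∀ s ∈ (S : Set X),
        ‖(v : X) - (P v : X)‖ ≤ (1 + K) * c * dist (v : X) s := by
      intro s hs
      obtain ⟨⟨w, t⟩, hft, hnorm⟩ := hc ((v : X) - s)
      have hwt : ((w : X)) + ((t : X)) = (v : X) - s := hft
      have hwnorm : ‖w‖ ≤ c * ‖(v : X) - s‖ :=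
        le_trans (norm_fst_le (w, t)) hnorm
      have humem : ((v - w : V) : X) ∈ S := by
        have ht : (t : X) = (v : X) - s - (w : X) := by
          rw [eq_sub_iff_add_eq, add_comm]; exact hwt
        have he : ((v - w : V) : X) = s + (t : X) := by
          push_cast
          rw [ht]; abel
        rw [he]; exact S.add_mem hs t.2
      have hfixu := hfix ⟨((v - w : V) : X), humem⟩ (v - w).2
      have hPvw : ((P (v - w) : S) : X) = ((v - w : V) : X) := by
        have : (⟨((v - w : V) : X), (v - w).2⟩ : V) = v - w := rfl
        rw [← this, hfixu]
      have e1 : ((P (v - w) : S) : X) = (P v : X) - (P w : X) := by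
        rw [map_sub]; push_cast; ring
      have e2 : ((v - w : V) : X) = (v : X) - (w : X) := by push_cast; ring
      have h3 : (P v : X) - (P w : X) = (v : X) - (w : X) := by
        rw [← e1, hPvw, e2]
      have hdiff : (v : X) - (P v : X) = (w : X) - (P w : X) := by
        rw [sub_eq_sub_iff_sub_eq_sub]; exact h3.symm
      have hPwle : ‖P w‖ ≤ K * ‖w‖ := Pc.le_opNorm w
      calc ‖(v : X) - (P v : X)‖ = ‖(w : X) - (P w : X)‖ := by rw [hdiff]
        _ ≤ ‖(w : X)‖ + ‖(P w : X)‖ := norm_sub_le _ _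
        _ ≤ ‖w‖ + K * ‖w‖ := by
            have h1 : ‖(w : X)‖ = ‖w‖ := rfl
            have h2 : ‖(P w : X)‖ = ‖P w‖ := rfl
            rw [h1, h2]; exact add_le_add le_rfl hPwle
        _ = (1 + K) * ‖w‖ := by ring
        _ ≤ (1 + K) * (c * ‖(v : X) - s‖) := by
            apply mul_le_mul_of_nonneg_left hwnorm (by linarith)
        _ = (1 + K) * c * dist (v : X) s := by rw [dist_eq_norm]; ring
    -- pass to the infimum
    rw [mul_comm, ← div_le_iff₀ hCpos]
    by_contra hlt
    push_neg at hlt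
    obtain ⟨y, hy, hdy⟩ := (Metric.infDist_lt_iff ⟨0, S.zero_mem⟩).mp hlt
    have := main y hy
    rw [lt_div_iff₀ hCpos] at hdy
    rw [mul_comm] at this
    linarith
end

section
/- Explicit first consistency measure: let P : V → S be the linear map determined by b(P v, σ) = ⟪v, E σ⟫, assume b(u, σ) = ⟪u, E σ⟫ for all u ∈ S ∩ V, σ ∈ S, assume V is not contained in S, and let Π_S be the orthogonal projection of X onto S. Then the smallest constant δ_V with ‖Π_S v − P v‖ ≤ δ_V ‖v − Π_S v‖ for all v ∈ V exists, is finite, equals sup over v ∈ V with Π_S v ≠ v and σ ∈ S, σ ≠ 0, of (b(Π_S v, σ) − ⟪v, E σ⟫) / (‖Π_S v − v‖ · ‖b(·,σ)‖_{S'}), and the quasi-optimality constant satisfies Cqopt = √(1 + δ_V²). -/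
open scoped RealInnerProductSpace

/-!
Write `w v = Π_S v - P v ∈ S`. By the defining property of `P`, the numerator in `δ_V` is
`b(w v, σ)`, and since `b` is nondegenerate on the finite-dimensional `S` in both arguments, the
supremum of `b(w v, σ) / ‖b(·, σ)‖_{S'}` over `σ` is `‖w v‖`, attained where `b(·, σ) = ⟪w v, ·⟫`.
So `δ_V` is the best constant in `‖w v‖ ≤ δ ‖v - Π_S v‖`. Such a constant exists: `w` is
continuous and vanishes on `S ∩ V`, and `V` stays uniformly away from the unit sphere of the
complement of `S ∩ V` in `S` (an injective map out of a finite-dimensional space, here into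
`X ⧸ V`, is bounded below). Finally Pythagoras, `‖v - P v‖² = ‖v - Π_S v‖² + ‖w v‖²`, turns
the best constant `δ_V` into the best constant `√(1 + δ_V²)` for quasi-optimality.
-/

theorem Submodule.infDist_eq_norm_sub_starProjection_s16 {𝕜 E : Type*} [RCLike 𝕜]
    [NormedAddCommGroup E] [InnerProductSpace 𝕜 E] (K : Submodule 𝕜 E)
    [K.HasOrthogonalProjection] (v : E) : Metric.infDist v K = ‖v - K.starProjection v‖ := by
  rw [Metric.infDist_eq_iInf, K.starProjection_minimal]
  simp_rw [dist_eq_norm]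
  rfl

theorem Submodule.norm_sub_sq_eq_add_norm_sq_starProjection {𝕜 E : Type*} [RCLike 𝕜]
    [NormedAddCommGroup E] [InnerProductSpace 𝕜 E] (K : Submodule 𝕜 E)
    [K.HasOrthogonalProjection] (v : E) {s : E} (hs : s ∈ K) :
    ‖v - s‖ ^ 2 = ‖v - K.starProjection v‖ ^ 2 + ‖K.starProjection v - s‖ ^ 2 := by
  have hperp : inner 𝕜 (v - K.starProjection v) (K.starProjection v - s) = 0 :=
    K.inner_left_of_mem_orthogonal (K.sub_mem (K.starProjection_apply_mem v) hs)
      (K.sub_starProjection_mem_orthogonal v)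
  rw [← sub_add_sub_cancel v (K.starProjection v) s]
  simpa only [sq] using norm_add_sq_eq_norm_sq_add_norm_sq_of_inner_eq_zero _ _ hperp

theorem Submodule.exists_norm_le_mul_norm_sub_of_disjoint {𝕜 E : Type*}
    [NontriviallyNormedField 𝕜] [CompleteSpace 𝕜] [NormedAddCommGroup E] [NormedSpace 𝕜 E]
    {W S : Submodule 𝕜 E} (hW : IsClosed (W : Set E)) [FiniteDimensional 𝕜 S]
    (hWS : Disjoint W S) :
    ∃ C, ∀ w ∈ W, ∀ s ∈ S, ‖w‖ ≤ C * ‖w - s‖ := by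
  have hker : LinearMap.ker (W.mkQ ∘ₗ S.subtype) = ⊥ := by
    rw [LinearMap.ker_comp, Submodule.ker_mkQ, ← disjoint_iff_comap_eq_bot]
    exact hWS.symm
  obtain ⟨K, -, hK⟩ := (W.mkQ ∘ₗ S.subtype).exists_antilipschitzWith hker
  refine ⟨1 + K, fun w hw s hs => ?_⟩
  have hs : ‖s‖ ≤ K * ‖w - s‖ := calc
    ‖s‖ ≤ K * ‖W.mkQ s‖ := by simpa using hK.le_mul_norm_sub (⟨s, hs⟩ : S) 0
    _ = K * ‖W.mkQ (s - w)‖ := by simp [(Submodule.Quotient.mk_eq_zero W).2 hw]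
    _ ≤ K * ‖w - s‖ := by
      rw [norm_sub_rev w]; gcongr; exact Submodule.Quotient.norm_mk_le W _
  calc ‖w‖ ≤ ‖w - s‖ + ‖s‖ := norm_le_norm_sub_add w s
    _ ≤ (1 + K) * ‖w - s‖ := by linarith

theorem Submodule.exists_mem_inf_norm_sub_le {𝕜 E : Type*} [RCLike 𝕜] [NormedAddCommGroup E]
    [InnerProductSpace 𝕜 E] {V S : Submodule 𝕜 E} (hV : IsClosed (V : Set E))
    [FiniteDimensional 𝕜 S] :
    ∃ C, ∀ v ∈ V, ∀ s ∈ S, ∃ u ∈ S ⊓ V, ‖v - u‖ ≤ C * ‖v - s‖ := by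
  set U := S ⊓ V
  have hdisj : Disjoint V (S ⊓ Uᗮ) :=
    disjoint_assoc.mp (by rw [inf_comm]; exact U.orthogonal_disjoint)
  obtain ⟨C, hC⟩ := exists_norm_le_mul_norm_sub_of_disjoint hV hdisj
  refine ⟨C, fun v hv s hs => ⟨U.starProjection s, U.starProjection_apply_mem s, ?_⟩⟩
  obtain ⟨huS, huV⟩ := U.starProjection_apply_mem s
  have := hC _ (V.sub_mem hv huV) _ ⟨S.sub_mem hs huS, U.sub_starProjection_mem_orthogonal s⟩
  rwa [sub_sub_sub_cancel_right] at this

theorem Submodule.exists_norm_apply_le_of_eq_zero_on_inf {𝕜 E F : Type*} [RCLike 𝕜]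
    [NormedAddCommGroup E] [InnerProductSpace 𝕜 E] [SeminormedAddCommGroup F] [NormedSpace 𝕜 F]
    {V S : Submodule 𝕜 E} (hV : IsClosed (V : Set E)) [FiniteDimensional 𝕜 S]
    (T : V →L[𝕜] F) (hT : ∀ u : V, (u : E) ∈ S → T u = 0) :
    ∃ K, ∀ (v : V), ∀ s ∈ S, ‖T v‖ ≤ K * ‖(v : E) - s‖ := by
  obtain ⟨C, hC⟩ := exists_mem_inf_norm_sub_le hV (S := S)
  refine ⟨‖T‖ * C, fun v s hs => ?_⟩
  obtain ⟨u, ⟨huS, huV⟩, hu⟩ := hC v v.2 s hs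
  calc ‖T v‖ = ‖T (v - ⟨u, huV⟩)‖ := by rw [map_sub, hT ⟨u, huV⟩ huS, sub_zero]
    _ ≤ ‖T‖ * ‖(v : E) - u‖ := T.le_opNorm _
    _ ≤ ‖T‖ * C * ‖(v : E) - s‖ := by rw [mul_assoc]; gcongr

theorem LinearMap.SeparatingLeft.flip_surjective {K G : Type*} [Field K] [AddCommGroup G]
    [Module K G] [FiniteDimensional K G] {b : G →ₗ[K] G →ₗ[K] K} (hb : b.SeparatingLeft) :
    Function.Surjective b.flip := by
  have hinj : Function.Injective b :=
    LinearMap.ker_eq_bot.mp (LinearMap.separatingLeft_iff_ker_eq_bot.mp hb)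
  have : b.flip = b.dualMap ∘ₗ (Module.evalEquiv K G).toLinearMap := rfl
  rw [this, LinearMap.coe_comp]
  exact (LinearMap.dualMap_surjective_of_injective hinj).comp (Module.evalEquiv K G).surjective

theorem LinearMap.SeparatingLeft.continuous_of_continuous_apply {𝕜 M G : Type*}
    [NontriviallyNormedField 𝕜] [CompleteSpace 𝕜] [TopologicalSpace M] [AddCommGroup M] [Module 𝕜 M]
    [NormedAddCommGroup G] [NormedSpace 𝕜 G] [FiniteDimensional 𝕜 G]
    {b : G →ₗ[𝕜] G →ₗ[𝕜] 𝕜} (hb : b.SeparatingLeft) (f : M →ₗ[𝕜] G)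
    (hf : ∀ σ, Continuous fun x => b (f x) σ) : Continuous f := by
  set e := Module.finBasis 𝕜 G
  have hcoord : ∀ i, Continuous fun x => e.equivFunL (f x) i := fun i => by
    obtain ⟨σ, hσ⟩ := hb.flip_surjective (e.coord i)
    convert hf σ using 2 with x
    rw [← LinearMap.flip_apply, hσ]
    rfl
  exact (e.equivFunL.symm.continuous.comp (continuous_pi hcoord)).congr fun x => by simp

section DualNorm

variable {G : Type*} [NormedAddCommGroup G] [InnerProductSpace ℝ G]

theorem sSup_inner_unit_sphere (w : G) : sSup {c | ∃ s : G, ‖s‖ = 1 ∧ c = ⟪w, s⟫} = ‖w‖ := by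
  have hle : ∀ c ∈ {c | ∃ s : G, ‖s‖ = 1 ∧ c = ⟪w, s⟫}, c ≤ ‖w‖ := by
    rintro c ⟨s, hs, rfl⟩
    simpa [hs] using real_inner_le_norm w s
  refine le_antisymm (Real.sSup_le hle (norm_nonneg w)) ?_
  rcases eq_or_ne w 0 with rfl | hw
  · rw [norm_zero]
    refine Real.sSup_nonneg ?_
    rintro c ⟨s, -, rfl⟩
    simp
  have hw' : ‖w‖ ≠ 0 := norm_ne_zero_iff.mpr hw
  refine le_csSup ⟨‖w‖, hle⟩ ⟨‖w‖⁻¹ • w, by simp [norm_smul, hw'], ?_⟩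
  rw [real_inner_smul_right, real_inner_self_eq_norm_sq]
  field_simp

/-- `‖b(·, σ)‖_{S'}`. -/
noncomputable def dualNorm (b : G →ₗ[ℝ] G →ₗ[ℝ] ℝ) (σ : G) : ℝ :=
  sSup {c | ∃ s : G, ‖s‖ = 1 ∧ c = b s σ}

theorem dualNorm_eq_norm {b : G →ₗ[ℝ] G →ₗ[ℝ] ℝ} {σ w : G} (h : ∀ s, b s σ = ⟪w, s⟫) :
    dualNorm b σ = ‖w‖ := by
  simp only [dualNorm, h]
  exact sSup_inner_unit_sphere w

variable [FiniteDimensional ℝ G]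

theorem exists_apply_eq_inner (b : G →ₗ[ℝ] G →ₗ[ℝ] ℝ) (σ : G) :
    ∃ w : G, ∀ s, b s σ = ⟪w, s⟫ :=
  ⟨(InnerProductSpace.toDual ℝ G).symm (b.flip σ).toContinuousLinearMap, fun s => by
    rw [InnerProductSpace.toDual_symm_apply]; rfl⟩

theorem apply_le_norm_mul_dualNorm (b : G →ₗ[ℝ] G →ₗ[ℝ] ℝ) (s σ : G) :
    b s σ ≤ ‖s‖ * dualNorm b σ := by
  obtain ⟨w, hw⟩ := exists_apply_eq_inner b σ
  rw [dualNorm_eq_norm hw, hw, mul_comm]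
  exact real_inner_le_norm w s

theorem dualNorm_nonneg (b : G →ₗ[ℝ] G →ₗ[ℝ] ℝ) (σ : G) : 0 ≤ dualNorm b σ := by
  obtain ⟨w, hw⟩ := exists_apply_eq_inner b σ
  exact (dualNorm_eq_norm hw).symm ▸ norm_nonneg w

theorem LinearMap.SeparatingLeft.exists_right_apply_eq_inner {b : G →ₗ[ℝ] G →ₗ[ℝ] ℝ}
    (hb : b.SeparatingLeft) (w : G) : ∃ σ : G, ∀ s, b s σ = ⟪w, s⟫ := by
  obtain ⟨σ, hσ⟩ := hb.flip_surjective (innerₛₗ ℝ w)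
  exact ⟨σ, fun s => LinearMap.congr_fun hσ s⟩

theorem isLeast_sSup_div_dualNorm {b : G →ₗ[ℝ] G →ₗ[ℝ] ℝ} (hb : b.SeparatingLeft)
    {ι : Type*} (w : ι → G) (d : ι → ℝ) (hd : ∀ i, 0 ≤ d i) (hK : ∃ K, ∀ i, ‖w i‖ ≤ K * d i) :
    IsLeast {t | 0 ≤ t ∧ ∀ i, ‖w i‖ ≤ t * d i}
      (sSup {r | ∃ i σ, d i ≠ 0 ∧ σ ≠ 0 ∧ r = b (w i) σ / (d i * dualNorm b σ)}) := by
  set R := {r | ∃ i σ, d i ≠ 0 ∧ σ ≠ 0 ∧ r = b (w i) σ / (d i * dualNorm b σ)}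
  have hle : ∀ t, 0 ≤ t → (∀ i, ‖w i‖ ≤ t * d i) → ∀ r ∈ R, r ≤ t := by
    rintro t ht htw r ⟨i, σ, -, -, rfl⟩
    refine div_le_of_le_mul₀ (mul_nonneg (hd i) (dualNorm_nonneg b σ)) ht ?_
    calc b (w i) σ ≤ ‖w i‖ * dualNorm b σ := apply_le_norm_mul_dualNorm b _ σ
      _ ≤ t * d i * dualNorm b σ := by gcongr; exacts [dualNorm_nonneg b σ, htw i]
      _ = t * (d i * dualNorm b σ) := mul_assoc ..
  have hmem : ∀ i, d i ≠ 0 → w i ≠ 0 → ‖w i‖ / d i ∈ R := by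
    intro i hdi hwi
    obtain ⟨σ, hσ⟩ := hb.exists_right_apply_eq_inner (w i)
    have hσ0 : σ ≠ 0 := by
      rintro rfl
      simpa [hwi] using (hσ (w i)).symm
    refine ⟨i, σ, hdi, hσ0, ?_⟩
    rw [hσ, dualNorm_eq_norm hσ, real_inner_self_eq_norm_sq]
    field_simp [norm_ne_zero_iff.mpr hwi]
  obtain ⟨K, hK⟩ := hK
  have hzero : ∀ i, d i = 0 → w i = 0 := fun i hdi =>
    norm_le_zero_iff.mp (by simpa [hdi] using hK i)
  have hbdd : BddAbove R := ⟨max K 0, hle _ (le_max_right K 0) fun i =>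
    (hK i).trans (mul_le_mul_of_nonneg_right (le_max_left K 0) (hd i))⟩
  have hnonneg : 0 ≤ sSup R := by
    rcases R.eq_empty_or_nonempty with hR | ⟨r, i, σ, hdi, hσ, hr⟩
    · rw [hR, Real.sSup_empty]
    refine Real.sSup_nonneg' ?_
    by_cases hwi : w i = 0
    · exact ⟨r, ⟨i, σ, hdi, hσ, hr⟩, by simp [hr, hwi]⟩
    · exact ⟨_, hmem i hdi hwi, div_nonneg (norm_nonneg _) (hd i)⟩
  refine ⟨⟨hnonneg, fun i => ?_⟩, fun t ⟨ht, htw⟩ => Real.sSup_le (hle t ht htw) ht⟩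
  by_cases hwi : w i = 0
  · simpa [hwi] using mul_nonneg hnonneg (hd i)
  have hdi : 0 < d i := (hd i).lt_of_ne' fun h => hwi (hzero i h)
  exact (div_le_iff₀ hdi).mp (le_csSup hbdd (hmem i hdi.ne' hwi))

end DualNorm

theorem isLeast_sqrt_one_add_sq {ι : Type*} {a d e : ι → ℝ} (ha : ∀ i, 0 ≤ a i)
    (hd : ∀ i, 0 ≤ d i) (he : ∀ i, 0 ≤ e i) (hpyth : ∀ i, e i ^ 2 = d i ^ 2 + a i ^ 2)
    (hpos : ∃ i, 0 < d i) {δ : ℝ} (hδ : IsLeast {t | 0 ≤ t ∧ ∀ i, a i ≤ t * d i} δ) :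
    IsLeast {C | ∀ i, e i ≤ C * d i} (√(1 + δ ^ 2)) := by
  refine ⟨fun i => ?_, fun C hC => ?_⟩
  · have hai : a i ≤ δ * d i := hδ.1.2 i
    rw [← Real.sqrt_sq (hd i), ← Real.sqrt_mul (by positivity)]
    refine Real.le_sqrt_of_sq_le ?_
    nlinarith [pow_le_pow_left₀ (ha i) hai 2, hpyth i]
  obtain ⟨i₀, hi₀⟩ := hpos
  have hC1 : 1 ≤ C := by
    have : d i₀ ≤ C * d i₀ := by nlinarith [hC i₀, hpyth i₀, he i₀, ha i₀]
    nlinarith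
  have hmem : √(C ^ 2 - 1) ∈ {t | 0 ≤ t ∧ ∀ i, a i ≤ t * d i} := by
    refine ⟨Real.sqrt_nonneg _, fun i => ?_⟩
    rw [← Real.sqrt_sq (hd i), ← Real.sqrt_mul (by nlinarith)]
    refine Real.le_sqrt_of_sq_le ?_
    nlinarith [hC i, hpyth i, he i, hd i]
  have hδC : δ ^ 2 ≤ C ^ 2 - 1 := by
    have := pow_le_pow_left₀ hδ.1.1 (hδ.2 hmem) 2
    rwa [Real.sq_sqrt (by nlinarith)] at this
  calc √(1 + δ ^ 2) ≤ √(C ^ 2) := Real.sqrt_le_sqrt (by linarith)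
    _ = C := Real.sqrt_sq (by linarith)

section Consistency

variable {X : Type*} [NormedAddCommGroup X] [InnerProductSpace ℝ X] {V S : Submodule ℝ X}
  {b : S →ₗ[ℝ] S →ₗ[ℝ] ℝ} {E : S →ₗ[ℝ] V} {P : V →ₗ[ℝ] S}

theorem apply_eq_self_of_consistent (hb : b.SeparatingLeft)
    (hP : ∀ (v : V) (σ : S), b (P v) σ = ⟪(v : X), ((E σ : V) : X)⟫)
    (hcons : ∀ u : S, (u : X) ∈ V → ∀ σ : S, b u σ = ⟪(u : X), ((E σ : V) : X)⟫)
    (u : V) (hu : (u : X) ∈ S) : P u = ⟨u, hu⟩ :=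
  sub_eq_zero.mp <| hb _ fun σ => by
    rw [map_sub, LinearMap.sub_apply, hP, hcons ⟨u, hu⟩ u.2, sub_self]

theorem exists_norm_orthogonalProjectionOnto_sub_le [FiniteDimensional ℝ S]
    (hV : IsClosed (V : Set X)) (hb : b.SeparatingLeft)
    (hP : ∀ (v : V) (σ : S), b (P v) σ = ⟪(v : X), ((E σ : V) : X)⟫)
    (hcons : ∀ u : S, (u : X) ∈ V → ∀ σ : S, b u σ = ⟪(u : X), ((E σ : V) : X)⟫) :
    ∃ K, ∀ v : V, ‖S.orthogonalProjectionOnto (v : X) - P v‖ ≤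
      K * ‖(v : X) - (S.orthogonalProjectionOnto (v : X) : X)‖ := by
  have hPc : Continuous P := hb.continuous_of_continuous_apply P fun σ => by
    simp only [hP]
    fun_prop
  set T : V →L[ℝ] S := S.orthogonalProjectionOnto ∘L V.subtypeL - ⟨P, hPc⟩
  have hT : ∀ u : V, (u : X) ∈ S → T u = 0 := fun u hu => by
    simp only [T, sub_apply, ContinuousLinearMap.comp_apply,
      ContinuousLinearMap.coe_mk', apply_eq_self_of_consistent hb hP hcons u hu, sub_eq_zero]
    exact S.orthogonalProjectionOnto_mem_subspace_eq_self ⟨u, hu⟩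
  obtain ⟨K, hK⟩ := Submodule.exists_norm_apply_le_of_eq_zero_on_inf hV T hT
  exact ⟨K, fun v => hK v _ (S.orthogonalProjectionOnto (v : X)).2⟩

end Consistency

theorem explicit_first_consistency_measure_general
    {X : Type*} [NormedAddCommGroup X] [InnerProductSpace ℝ X]
    (V S : Submodule ℝ X) [CompleteSpace V] [FiniteDimensional ℝ S]
    (b : S →ₗ[ℝ] S →ₗ[ℝ] ℝ) (hb : ∀ s : S, (∀ σ : S, b s σ = 0) → s = 0)
    (E : S →ₗ[ℝ] V)
    (P : V →ₗ[ℝ] S)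
    (hP : ∀ (v : V) (σ : S), b (P v) σ = ⟪(v : X), ((E σ : V) : X)⟫)
    (hcons : ∀ u : S, (u : X) ∈ V → ∀ σ : S, b u σ = ⟪(u : X), ((E σ : V) : X)⟫)
    (hVS : ¬ V ≤ S)
    (δV : ℝ)
    (hδV : δV = sSup {r : ℝ | ∃ (v : V) (σ : S),
        ((Submodule.orthogonalProjectionOnto S (v : X) : X)) ≠ (v : X) ∧ σ ≠ 0 ∧
        r = (b (Submodule.orthogonalProjectionOnto S (v : X)) σ - ⟪(v : X), ((E σ : V) : X)⟫) /
            (‖((Submodule.orthogonalProjectionOnto S (v : X) : X)) - (v : X)‖ *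
              sSup {c : ℝ | ∃ s : S, ‖s‖ = 1 ∧ c = b s σ})})
    (Cqopt : ℝ)
    (hCqopt : IsLeast {C : ℝ | ∀ v : V,
        ‖(v : X) - (P v : X)‖ ≤ C * Metric.infDist (v : X) (S : Set X)} Cqopt) :
    IsLeast {d : ℝ | 0 ≤ d ∧ ∀ v : V,
        ‖((Submodule.orthogonalProjectionOnto S (v : X) : X)) - (P v : X)‖ ≤
          d * ‖(v : X) - (Submodule.orthogonalProjectionOnto S (v : X) : X)‖} δV ∧
      Cqopt = Real.sqrt (1 + δV ^ 2) := by
  have hV : IsClosed (V : Set X) := (completeSpace_coe_iff_isComplete.mp ‹_›).isClosed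
  obtain ⟨K, hK⟩ := exists_norm_orthogonalProjectionOnto_sub_le hV hb hP hcons
  have hδ := isLeast_sSup_div_dualNorm hb
    (fun v : V => S.orthogonalProjectionOnto (v : X) - P v)
    (fun v => ‖(v : X) - (S.orthogonalProjectionOnto (v : X) : X)‖) (fun _ => norm_nonneg _)
    ⟨K, hK⟩
  have hR : δV = sSup {r | ∃ (v : V) (σ : S),
      ‖(v : X) - (S.orthogonalProjectionOnto (v : X) : X)‖ ≠ 0 ∧ σ ≠ 0 ∧
      r = b (S.orthogonalProjectionOnto (v : X) - P v) σ /
        (‖(v : X) - (S.orthogonalProjectionOnto (v : X) : X)‖ * dualNorm b σ)} := by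
    rw [hδV]
    congr 1
    ext r
    refine exists₂_congr fun v σ => ?_
    rw [map_sub, LinearMap.sub_apply, hP, norm_sub_rev, norm_ne_zero_iff, sub_ne_zero, ne_comm]
    rfl
  rw [← hR] at hδ
  refine ⟨hδ, hCqopt.unique ?_⟩
  obtain ⟨x, hxV, hxS⟩ := SetLike.not_le_iff_exists.mp hVS
  have hpos : 0 < ‖x - S.starProjection x‖ :=
    norm_pos_iff.mpr <| sub_ne_zero.mpr fun h => hxS (S.starProjection_eq_self_iff.mp h.symm)
  simp_rw [S.infDist_eq_norm_sub_starProjection_s16]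
  exact isLeast_sqrt_one_add_sq (fun _ => norm_nonneg _) (fun _ => norm_nonneg _)
    (fun _ => norm_nonneg _) (fun v : V => S.norm_sub_sq_eq_add_norm_sq_starProjection v (P v).2)
    ⟨⟨x, hxV⟩, hpos⟩ hδ

/-- **Explicit first consistency measure.** Let `P : V → S` be determined by
`b(P v, σ) = ⟪v, E σ⟫`, assume `b(u, σ) = ⟪u, E σ⟫` for all `u ∈ S ∩ V`, `σ ∈ S`, and
assume `V ⊄ S`. Then the smallest constant `δ_V` with
`‖Π_S v − P v‖ ≤ δ_V ‖v − Π_S v‖` for all `v ∈ V` exists, equals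
`sup (b(Π_S v, σ) − ⟪v, E σ⟫)/(‖Π_S v − v‖ ‖b(·,σ)‖_{S'})` over `v` with `Π_S v ≠ v` and
`σ ≠ 0`, and the quasi-optimality constant satisfies `Cqopt = √(1 + δ_V²)`. -/
theorem explicit_first_consistency_measure
    {X : Type*} [NormedAddCommGroup X] [InnerProductSpace ℝ X] [CompleteSpace X]
    (V S : Submodule ℝ X) [CompleteSpace V] [FiniteDimensional ℝ S]
    (hSne : S ≠ ⊥) (hsum : V ⊔ S = ⊤)
    (b : S →ₗ[ℝ] S →ₗ[ℝ] ℝ) (hb : ∀ s : S, (∀ σ : S, b s σ = 0) → s = 0)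
    (E : S →ₗ[ℝ] V)
    (P : V →ₗ[ℝ] S)
    (hP : ∀ (v : V) (σ : S), b (P v) σ = ⟪(v : X), ((E σ : V) : X)⟫)
    (hcons : ∀ u : S, (u : X) ∈ V → ∀ σ : S, b u σ = ⟪(u : X), ((E σ : V) : X)⟫)
    (hVS : ¬ V ≤ S)
    (δV : ℝ)
    (hδV : δV = sSup {r : ℝ | ∃ (v : V) (σ : S),
        ((Submodule.orthogonalProjectionOnto S (v : X) : X)) ≠ (v : X) ∧ σ ≠ 0 ∧
        r = (b (Submodule.orthogonalProjectionOnto S (v : X)) σ - ⟪(v : X), ((E σ : V) : X)⟫) /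
            (‖((Submodule.orthogonalProjectionOnto S (v : X) : X)) - (v : X)‖ *
              sSup {c : ℝ | ∃ s : S, ‖s‖ = 1 ∧ c = b s σ})})
    (Cqopt : ℝ)
    (hCqopt : IsLeast {C : ℝ | ∀ v : V,
        ‖(v : X) - (P v : X)‖ ≤ C * Metric.infDist (v : X) (S : Set X)} Cqopt) :
    IsLeast {d : ℝ | 0 ≤ d ∧ ∀ v : V,
        ‖((Submodule.orthogonalProjectionOnto S (v : X) : X)) - (P v : X)‖ ≤
          d * ‖(v : X) - (Submodule.orthogonalProjectionOnto S (v : X) : X)‖} δV ∧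
      Cqopt = Real.sqrt (1 + δV ^ 2) :=
  explicit_first_consistency_measure_general V S b hb E P hP hcons hVS δV hδV Cqopt hCqopt
end

section
/- Explicit second consistency measure: let P : V → S be the linear map determined by b(P v, σ) = ⟪v, E σ⟫, assume b(u, σ) = ⟪u, E σ⟫ for all u ∈ S ∩ V, σ ∈ S, let Π_V be the orthogonal projection of X onto V, and let Cstab := sup_{v ∈ V, ‖v‖ = 1} ‖P v‖. Then the smallest constant δ_S such that for all s ∈ S, sup_{σ ∈ S, σ ≠ 0} (b(s,σ) − ⟪Π_V s, E σ⟫) / ‖b(·,σ)‖_{S'} ≤ δ_S ‖s − Π_V s‖ exists and is finite, and the quasi-optimality constant satisfies max{Cstab, δ_S} ≤ Cqopt ≤ √(Cstab² + δ_S²). -/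
/-!
Extend `P` to the oblique projection `A : X → X` onto `S` with `A = P` on `V` (well defined
because consistency makes `P` the identity on `S ∩ V`). Since `X = V + S`, `Cqopt` is exactly the
norm of `1 - A`, and by Kato's identity `‖1 - A‖ = ‖A‖` for a nontrivial idempotent. On `V` the
map `A` is `P`, so `Cstab ≤ ‖A‖`. The consistency error `s - P (Π_V s)` equals `A (s - Π_V s)`, and
by duality (`b` is nondegenerate on the finite-dimensional `S`) the supremum defining `δ_S` is its
norm, so `δ_S ≤ ‖A‖`. Conversely every `x` splits orthogonally as `Π_V x + (x - Π_V x)` with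
`x - Π_V x = s - Π_V s` for some `s ∈ S`, and Cauchy–Schwarz gives `‖A‖ ≤ √(Cstab² + δ_S²)`.
-/

open scoped RealInnerProductSpace

section Kato

variable {X : Type*} [NormedAddCommGroup X] [InnerProductSpace ℝ X]

theorem norm_le_mul_norm_add_of_forall_norm_le {u v : X} {M : ℝ} (hM : 1 ≤ M)
    (h : ∀ t : ℝ, ‖u‖ ≤ M * ‖u + t • v‖) : ‖v‖ ≤ M * ‖u + v‖ := by
  have quad : ∀ t : ℝ,
      0 ≤ (M ^ 2 * ‖v‖ ^ 2) * (t * t) + (2 * M ^ 2 * ⟪u, v⟫) * t + (M ^ 2 - 1) * ‖u‖ ^ 2 := by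
    intro t
    have hsq : ‖u‖ ^ 2 ≤ M ^ 2 * ‖u + t • v‖ ^ 2 := by
      rw [← mul_pow]
      exact pow_le_pow_left₀ (norm_nonneg u) (h t) 2
    rw [norm_add_sq_real, real_inner_smul_right, norm_smul, Real.norm_eq_abs, mul_pow,
      sq_abs] at hsq
    linarith
  have hdisc := discrim_le_zero quad
  rw [discrim] at hdisc
  have hM2 : 1 ≤ M ^ 2 := one_le_pow₀ hM
  set Y := M ^ 2 * ‖u‖ ^ 2 + (M ^ 2 - 1) * ‖v‖ ^ 2
  have hY : 0 ≤ Y := by positivity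
  -- AM-GM: `4 M² (M² - 1) ‖u‖² ‖v‖² ≤ Y²`
  have hsq : (2 * M ^ 2 * ⟪u, v⟫) ^ 2 ≤ Y ^ 2 := by
    nlinarith [sq_nonneg (M ^ 2 * ‖u‖ ^ 2 - (M ^ 2 - 1) * ‖v‖ ^ 2)]
  have hlow := (abs_le_of_sq_le_sq' hsq hY).1
  refine (pow_le_pow_iff_left₀ (norm_nonneg v) (by positivity) two_ne_zero).1 ?_
  rw [mul_pow, norm_add_sq_real]
  linarith

theorem norm_sub_apply_le_of_isIdempotentElem {A : X →ₗ[ℝ] X} (hA : IsIdempotentElem A)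
    {M : ℝ} (hM : 1 ≤ M) (hAM : ∀ x, ‖A x‖ ≤ M * ‖x‖) (x : X) : ‖x - A x‖ ≤ M * ‖x‖ := by
  have hAA : A (A x) = A x := congr($hA.eq x)
  have hAt : ∀ t : ℝ, A (A x + t • (x - A x)) = A x := by
    intro t
    rw [map_add, map_smul, map_sub, hAA, sub_self, smul_zero, add_zero]
  have := norm_le_mul_norm_add_of_forall_norm_le hM fun t => hAt t ▸ hAM (A x + t • (x - A x))
  rwa [add_sub_cancel] at this

theorem forall_norm_apply_le_iff_forall_norm_sub_apply_le {A : X →ₗ[ℝ] X}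
    (hA : IsIdempotentElem A) {M : ℝ} (hM : 1 ≤ M) :
    (∀ x, ‖A x‖ ≤ M * ‖x‖) ↔ ∀ x, ‖x - A x‖ ≤ M * ‖x‖ := by
  refine ⟨norm_sub_apply_le_of_isIdempotentElem hA hM, fun h x => ?_⟩
  simpa using norm_sub_apply_le_of_isIdempotentElem hA.one_sub hM (by simpa using h) x

end Kato

theorem Submodule.exists_linearMap_extend_of_sup_eq_top {R M N : Type*} [Ring R]
    [AddCommGroup M] [Module R M] [AddCommGroup N] [Module R N] {V S : Submodule R M}
    (hsum : V ⊔ S = ⊤) (f : V →ₗ[R] N) (g : S →ₗ[R] N)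
    (h : ∀ (x : V) (y : S), (x : M) = y → f x = g y) :
    ∃ A : M →ₗ[R] N, (∀ v : V, A v = f v) ∧ ∀ s : S, A s = g s := by
  let F := LinearPMap.sup ⟨V, f⟩ ⟨S, g⟩ h
  have hF : ∀ x : M, x ∈ F.domain := fun x => by
    change x ∈ V ⊔ S
    rw [hsum]
    exact Submodule.mem_top
  refine ⟨F.toFun ∘ₗ LinearMap.id.codRestrict F.domain hF, fun v => ?_, fun s => ?_⟩
  · exact ((LinearPMap.left_le_sup _ _ h).2 rfl).symm
  · exact ((LinearPMap.right_le_sup _ _ h).2 rfl).symm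

theorem Submodule.exists_isProj_extend_of_sup_eq_top {R M : Type*} [Ring R] [AddCommGroup M]
    [Module R M] {V S : Submodule R M} (hsum : V ⊔ S = ⊤) (P : V →ₗ[R] S)
    (hP : ∀ (v : V) (s : S), (v : M) = s → P v = s) :
    ∃ A : M →ₗ[R] M, LinearMap.IsProj S A ∧ ∀ v : V, A v = P v := by
  obtain ⟨A, hAV, hAS⟩ := exists_linearMap_extend_of_sup_eq_top hsum P LinearMap.id hP
  exact ⟨S.subtype ∘ₗ A, ⟨fun x => (A x).2, fun x hx => congrArg Subtype.val (hAS ⟨x, hx⟩)⟩,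
    fun v => congrArg Subtype.val (hAV v)⟩

namespace LinearMap.IsProj

section Normed

variable {X : Type*} [NormedAddCommGroup X] [NormedSpace ℝ X] {V S : Submodule ℝ X}
  {A : X →ₗ[ℝ] X}

theorem norm_sub_apply_le_mul_infDist (hA : IsProj S A) {C : ℝ} (hC : 0 ≤ C)
    (hAC : ∀ x, ‖x - A x‖ ≤ C * ‖x‖) (x : X) :
    ‖x - A x‖ ≤ C * Metric.infDist x (S : Set X) := by
  have : Nonempty (S : Set X) := ⟨⟨0, S.zero_mem⟩⟩
  rw [Metric.infDist_eq_iInf, Real.mul_iInf_of_nonneg hC]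
  refine le_ciInf fun ⟨s, hs⟩ => ?_
  have hxs : x - s - A (x - s) = x - A x := by
    rw [map_sub, hA.map_id s hs]
    abel
  rw [dist_eq_norm, ← hxs]
  exact hAC (x - s)

theorem norm_sub_apply_le_of_forall_infDist (hA : IsProj S A) (hsum : V ⊔ S = ⊤)
    {C : ℝ} (hC : 0 ≤ C)
    (h : ∀ v : V, ‖(v : X) - A v‖ ≤ C * Metric.infDist (v : X) (S : Set X)) (x : X) :
    ‖x - A x‖ ≤ C * ‖x‖ := by
  obtain ⟨v, hv, s, hs, rfl⟩ := Submodule.mem_sup.1 (hsum ▸ Submodule.mem_top : x ∈ V ⊔ S)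
  have hdist : Metric.infDist v (S : Set X) ≤ ‖v + s‖ := by
    simpa [dist_eq_norm] using Metric.infDist_le_dist_of_mem (x := v) (S.neg_mem hs)
  calc ‖v + s - A (v + s)‖ = ‖v - A v‖ := by rw [map_add, hA.map_id s hs]; abel_nf
    _ ≤ C * Metric.infDist v (S : Set X) := h ⟨v, hv⟩
    _ ≤ C * ‖v + s‖ := mul_le_mul_of_nonneg_left hdist hC

theorem forall_norm_sub_apply_le_mul_infDist_iff (hA : IsProj S A) (hsum : V ⊔ S = ⊤)
    {C : ℝ} (hC : 0 ≤ C) :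
    (∀ v : V, ‖(v : X) - A v‖ ≤ C * Metric.infDist (v : X) (S : Set X)) ↔
      ∀ x, ‖x - A x‖ ≤ C * ‖x‖ :=
  ⟨hA.norm_sub_apply_le_of_forall_infDist hsum hC,
    fun h v => hA.norm_sub_apply_le_mul_infDist hC h v⟩

theorem one_le_of_isLeast (hA : IsProj S A) (hS : IsClosed (S : Set X)) {Cq : ℝ}
    (h : IsLeast {C : ℝ | ∀ v : V,
      ‖(v : X) - A v‖ ≤ C * Metric.infDist (v : X) (S : Set X)} Cq) :
    1 ≤ Cq := by
  by_cases hVS : ∀ v : V, (v : X) ∈ S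
  · have hmem : Cq - 1 ∈ {C : ℝ | ∀ v : V,
        ‖(v : X) - A v‖ ≤ C * Metric.infDist (v : X) (S : Set X)} :=
      fun v => by simp [hA.map_id _ (hVS v), Metric.infDist_zero_of_mem (hVS v)]
    linarith [h.2 hmem]
  obtain ⟨v, hv⟩ := not_forall.1 hVS
  have hpos : 0 < Metric.infDist (v : X) (S : Set X) :=
    (hS.notMem_iff_infDist_pos ⟨0, S.zero_mem⟩).1 hv
  have hle : Metric.infDist (v : X) (S : Set X) ≤ ‖(v : X) - A v‖ := by
    simpa [dist_eq_norm] using Metric.infDist_le_dist_of_mem (x := (v : X)) (hA.map_mem v)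
  exact (le_mul_iff_one_le_left hpos).1 (hle.trans (h.1 v))

end Normed

variable {X : Type*} [NormedAddCommGroup X] [InnerProductSpace ℝ X] {V S : Submodule ℝ X}
  {A : X →ₗ[ℝ] X}

theorem norm_apply_le_of_isLeast (hA : IsProj S A) (hsum : V ⊔ S = ⊤)
    (hS : IsClosed (S : Set X)) {Cq : ℝ}
    (h : IsLeast {C : ℝ | ∀ v : V,
      ‖(v : X) - A v‖ ≤ C * Metric.infDist (v : X) (S : Set X)} Cq)
    (x : X) : ‖A x‖ ≤ Cq * ‖x‖ := by
  have hCq := hA.one_le_of_isLeast hS h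
  refine (forall_norm_apply_le_iff_forall_norm_sub_apply_le hA.isIdempotentElem hCq).2 ?_ x
  exact (hA.forall_norm_sub_apply_le_mul_infDist_iff hsum (by linarith)).1 h.1

theorem le_of_isLeast_of_norm_apply_le (hA : IsProj S A) (hsum : V ⊔ S = ⊤) (hS : S ≠ ⊥)
    {Cq N : ℝ}
    (h : IsLeast {C : ℝ | ∀ v : V,
      ‖(v : X) - A v‖ ≤ C * Metric.infDist (v : X) (S : Set X)} Cq)
    (hN : ∀ x, ‖A x‖ ≤ N * ‖x‖) : Cq ≤ N := by
  obtain ⟨s, hs, hs0⟩ := (Submodule.ne_bot_iff S).1 hS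
  have hN1 : 1 ≤ N :=
    (le_mul_iff_one_le_left (norm_pos_iff.2 hs0)).1 (by simpa only [hA.map_id s hs] using hN s)
  refine h.2 <| (hA.forall_norm_sub_apply_le_mul_infDist_iff hsum (by linarith)).2 ?_
  exact (forall_norm_apply_le_iff_forall_norm_sub_apply_le hA.isIdempotentElem hN1).1 hN

end LinearMap.IsProj

section Orthogonal

variable {X F : Type*} [NormedAddCommGroup X] [InnerProductSpace ℝ X]
  [NormedAddCommGroup F] [NormedSpace ℝ F]

theorem mul_add_mul_le_sqrt_mul_sqrt (a b c d : ℝ) :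
    a * c + b * d ≤ √(a ^ 2 + b ^ 2) * √(c ^ 2 + d ^ 2) := by
  rw [← Real.sqrt_mul (by positivity)]
  refine Real.le_sqrt_of_sq_le ?_
  nlinarith [sq_nonneg (a * d - b * c)]

theorem norm_apply_le_sqrt_of_orthogonal (K : Submodule ℝ X) [K.HasOrthogonalProjection]
    (A : X →ₗ[ℝ] F) {a d : ℝ} (hK : ∀ x ∈ K, ‖A x‖ ≤ a * ‖x‖)
    (hKperp : ∀ x ∈ Kᗮ, ‖A x‖ ≤ d * ‖x‖) (x : X) :
    ‖A x‖ ≤ √(a ^ 2 + d ^ 2) * ‖x‖ := by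
  set p := K.starProjection x
  have hp : p ∈ K := K.starProjection_apply_mem x
  have hxp : x - p ∈ Kᗮ := K.sub_starProjection_mem_orthogonal x
  have hx : ‖x‖ = √(‖p‖ ^ 2 + ‖x - p‖ ^ 2) := by
    rw [← sq_eq_sq₀ (norm_nonneg _) (Real.sqrt_nonneg _), Real.sq_sqrt (by positivity)]
    simpa [sq] using
      norm_add_sq_eq_norm_sq_add_norm_sq_real (K.inner_right_of_mem_orthogonal hp hxp)
  calc ‖A x‖ = ‖A p + A (x - p)‖ := by rw [← map_add, add_sub_cancel]
    _ ≤ a * ‖p‖ + d * ‖x - p‖ := (norm_add_le _ _).trans <| add_le_add (hK p hp) (hKperp _ hxp)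
    _ ≤ √(a ^ 2 + d ^ 2) * ‖x‖ := hx ▸ mul_add_mul_le_sqrt_mul_sqrt _ _ _ _

end Orthogonal

theorem Submodule.exists_sub_starProjection_eq_of_mem_orthogonal {X : Type*}
    [NormedAddCommGroup X] [InnerProductSpace ℝ X] {V S : Submodule ℝ X}
    [V.HasOrthogonalProjection] (hsum : V ⊔ S = ⊤) {z : X} (hz : z ∈ Vᗮ) :
    ∃ s ∈ S, s - V.starProjection s = z := by
  obtain ⟨v, hv, s, hs, rfl⟩ := Submodule.mem_sup.1 (hsum ▸ Submodule.mem_top : z ∈ V ⊔ S)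
  have h0 := V.starProjection_apply_eq_zero_iff.2 hz
  rw [map_add, V.starProjection_eq_self_iff.2 hv] at h0
  exact ⟨s, hs, by rw [← sub_zero (v + s), ← h0]; abel⟩

section Duality

variable {F : Type*} [NormedAddCommGroup F] [InnerProductSpace ℝ F]

theorem sSup_inner_unit_eq_norm (u : F) :
    sSup {c : ℝ | ∃ s : F, ‖s‖ = 1 ∧ c = ⟪u, s⟫} = ‖u‖ := by
  rcases eq_or_ne u 0 with rfl | hu
  · rw [norm_zero]
    refine le_antisymm (Real.sSup_nonpos ?_) (Real.sSup_nonneg ?_) <;>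
      · rintro r ⟨s, -, rfl⟩
        simp
  refine IsGreatest.csSup_eq ⟨⟨‖u‖⁻¹ • u, norm_smul_inv_norm hu, ?_⟩, ?_⟩
  · rw [real_inner_smul_right, real_inner_self_eq_norm_sq]
    field_simp
  · rintro c ⟨s, hs, rfl⟩
    simpa [hs] using real_inner_le_norm u s

variable [FiniteDimensional ℝ F] (b : F →ₗ[ℝ] F →ₗ[ℝ] ℝ)

theorem bddAbove_setOf_apply_unit (σ : F) :
    BddAbove {c : ℝ | ∃ s : F, ‖s‖ = 1 ∧ c = b s σ} := by
  let f := LinearMap.toContinuousLinearMap (b.flip σ)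
  refine ⟨‖f‖, ?_⟩
  rintro c ⟨s, hs, rfl⟩
  simpa [f, hs] using (le_abs_self _).trans (f.le_opNorm s)

theorem apply_le_norm_mul_sSup_apply_unit (u σ : F) :
    b u σ ≤ ‖u‖ * sSup {c : ℝ | ∃ s : F, ‖s‖ = 1 ∧ c = b s σ} := by
  rcases eq_or_ne u 0 with rfl | hu
  · simp
  have hmem : ‖u‖⁻¹ * b u σ ∈ {c : ℝ | ∃ s : F, ‖s‖ = 1 ∧ c = b s σ} :=
    ⟨‖u‖⁻¹ • u, norm_smul_inv_norm hu, by simp⟩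
  rw [← inv_mul_le_iff₀ (norm_pos_iff.2 hu)]
  exact le_csSup (bddAbove_setOf_apply_unit b σ) hmem

theorem sSup_apply_div_sSup_apply_unit_eq_norm (hb : ∀ s, (∀ σ, b s σ = 0) → s = 0) (u : F) :
    sSup {r : ℝ | ∃ σ : F, σ ≠ 0 ∧ r = b u σ / sSup {c : ℝ | ∃ s : F, ‖s‖ = 1 ∧ c = b s σ}} =
      ‖u‖ := by
  have hle : ∀ σ : F, σ ≠ 0 → b u σ / sSup {c : ℝ | ∃ s : F, ‖s‖ = 1 ∧ c = b s σ} ≤ ‖u‖ := by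
    intro σ hσ
    have h₁ := apply_le_norm_mul_sSup_apply_unit b σ σ
    have h₂ := apply_le_norm_mul_sSup_apply_unit b (-σ) σ
    rw [map_neg, LinearMap.neg_apply, norm_neg] at h₂
    have hD : 0 ≤ sSup {c : ℝ | ∃ s : F, ‖s‖ = 1 ∧ c = b s σ} :=
      nonneg_of_mul_nonneg_right (by linarith) (norm_pos_iff.2 hσ)
    exact div_le_of_le_mul₀ hD (norm_nonneg u) (apply_le_norm_mul_sSup_apply_unit b u σ)
  rcases eq_or_ne u 0 with rfl | hu
  · rw [norm_zero]
    refine le_antisymm (Real.sSup_nonpos ?_) (Real.sSup_nonneg ?_) <;>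
      · rintro r ⟨σ, -, rfl⟩
        simp
  -- the Riesz representative `σ` of `⟪u, ·⟫` with respect to `b` attains the supremum
  have hbnd : b.flip.Nondegenerate :=
    (LinearMap.BilinForm.Nondegenerate.ofSeparatingLeft hb).flip
  set σ := (LinearMap.BilinForm.toDual b.flip hbnd).symm (innerₗ F u)
  have hσ : ∀ s, b s σ = ⟪u, s⟫ := fun s =>
    LinearMap.BilinForm.apply_toDual_symm_apply (B := b.flip) (innerₗ F u) s
  have hσ0 : σ ≠ 0 := fun h => hu (by simpa [h] using (hσ u).symm)
  have hDσ : sSup {c : ℝ | ∃ s : F, ‖s‖ = 1 ∧ c = b s σ} = ‖u‖ := by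
    simp_rw [hσ]
    exact sSup_inner_unit_eq_norm u
  refine IsGreatest.csSup_eq ⟨⟨σ, hσ0, ?_⟩, fun r ⟨σ', hσ', hr⟩ => hr ▸ hle σ' hσ'⟩
  rw [hDσ, hσ, real_inner_self_eq_norm_sq]
  field_simp

end Duality

theorem exists_isLeast_setOf_nonneg_forall_le_mul {ι : Type*} (f g : ι → ℝ) {d₀ : ℝ}
    (hd₀ : 0 ≤ d₀ ∧ ∀ i, f i ≤ d₀ * g i) :
    ∃ δ, IsLeast {d : ℝ | 0 ≤ d ∧ ∀ i, f i ≤ d * g i} δ := by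
  have hclosed : IsClosed {d : ℝ | 0 ≤ d ∧ ∀ i, f i ≤ d * g i} := by
    simp only [Set.ofPred_and, Set.ofPred_forall]
    exact isClosed_Ici.inter <| isClosed_iInter fun i =>
      isClosed_le continuous_const (continuous_id.mul continuous_const)
  exact ⟨_, hclosed.isLeast_csInf ⟨d₀, hd₀⟩ ⟨0, fun d hd => hd.1⟩⟩

theorem sSup_norm_apply_unit_eq_norm_mkContinuous {E G : Type*} [NormedAddCommGroup E]
    [NormedSpace ℝ E] [NormedAddCommGroup G] [NormedSpace ℝ G] (f : E →ₗ[ℝ] G) {M : ℝ}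
    (hf : ∀ x, ‖f x‖ ≤ M * ‖x‖) :
    sSup {r : ℝ | ∃ v : E, ‖v‖ = 1 ∧ r = ‖f v‖} = ‖f.mkContinuous M hf‖ := by
  rw [← ContinuousLinearMap.sSup_sphere_eq_norm]
  congr 1
  ext r
  simp [eq_comm]

theorem explicit_second_consistency_measure_general
    {X : Type*} [NormedAddCommGroup X] [InnerProductSpace ℝ X]
    (V S : Submodule ℝ X) [CompleteSpace V] [FiniteDimensional ℝ S]
    (hSne : S ≠ ⊥) (hsum : V ⊔ S = ⊤)
    (b : S →ₗ[ℝ] S →ₗ[ℝ] ℝ) (hb : ∀ s : S, (∀ σ : S, b s σ = 0) → s = 0)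
    (E : S →ₗ[ℝ] V)
    (P : V →ₗ[ℝ] S)
    (hP : ∀ (v : V) (σ : S), b (P v) σ = ⟪(v : X), ((E σ : V) : X)⟫)
    (hcons : ∀ u : S, (u : X) ∈ V → ∀ σ : S, b u σ = ⟪(u : X), ((E σ : V) : X)⟫)
    (Cstab : ℝ)
    (hCstab : Cstab = sSup {r : ℝ | ∃ v : V, ‖(v : X)‖ = 1 ∧ r = ‖(P v : X)‖})
    (Cqopt : ℝ)
    (hCqopt : IsLeast {C : ℝ | ∀ v : V,
        ‖(v : X) - (P v : X)‖ ≤ C * Metric.infDist (v : X) (S : Set X)} Cqopt) :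
    ∃ δS : ℝ,
      IsLeast {d : ℝ | 0 ≤ d ∧ ∀ s : S,
          sSup {r : ℝ | ∃ σ : S, σ ≠ 0 ∧
            r = (b s σ - ⟪((Submodule.orthogonalProjectionOnto V (s : X) : X)), ((E σ : V) : X)⟫) /
                sSup {c : ℝ | ∃ s' : S, ‖s'‖ = 1 ∧ c = b s' σ}} ≤
            d * ‖(s : X) - (Submodule.orthogonalProjectionOnto V (s : X) : X)‖} δS ∧
      max Cstab δS ≤ Cqopt ∧ Cqopt ≤ Real.sqrt (Cstab ^ 2 + δS ^ 2) := by
  have hPS : ∀ (v : V) (s : S), (v : X) = s → P v = s := fun v s hvs =>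
    sub_eq_zero.1 <| hb _ fun σ => by
      rw [map_sub, LinearMap.sub_apply, hP, hvs, hcons s (hvs ▸ v.2), sub_self]
  obtain ⟨A, hA, hAV⟩ := Submodule.exists_isProj_extend_of_sup_eq_top hsum P hPS
  have hAz (s : S) :
      A (s - V.orthogonalProjectionOnto s) = ↑(s - P (V.orthogonalProjectionOnto s)) := by
    rw [map_sub, hA.map_id s s.2, hAV, Submodule.coe_sub]
  simp_rw [← hAV] at hCqopt
  have hS := S.closed_of_finiteDimensional
  have hCq0 : 0 ≤ Cqopt := zero_le_one.trans (hA.one_le_of_isLeast hS hCqopt)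
  have hACq := hA.norm_apply_le_of_isLeast hsum hS hCqopt
  simp_rw [← hP, ← LinearMap.sub_apply, ← map_sub, sSup_apply_div_sSup_apply_unit_eq_norm b hb]
  obtain ⟨δS, hδS⟩ :=
    exists_isLeast_setOf_nonneg_forall_le_mul _ _ ⟨hCq0, fun s => hAz s ▸ hACq _⟩
  have hPCq (v : V) : ‖P v‖ ≤ Cqopt * ‖v‖ := by
    simpa only [hAV, Submodule.coe_norm] using hACq v
  replace hCstab := hCstab.trans (sSup_norm_apply_unit_eq_norm_mkContinuous P hPCq)
  refine ⟨δS, hδS, max_le (hCstab ▸ P.mkContinuous_norm_le hCq0 hPCq)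
    (hδS.2 ⟨hCq0, fun s => hAz s ▸ hACq _⟩), hA.le_of_isLeast_of_norm_apply_le hsum hSne hCqopt ?_⟩
  refine norm_apply_le_sqrt_of_orthogonal V A (fun x hx => ?_) (fun z hz => ?_)
  · rw [hCstab, hAV ⟨x, hx⟩]
    exact (P.mkContinuous Cqopt hPCq).le_opNorm ⟨x, hx⟩
  · obtain ⟨s, hs, rfl⟩ := Submodule.exists_sub_starProjection_eq_of_mem_orthogonal hsum hz
    exact hAz ⟨s, hs⟩ ▸ hδS.1.2 ⟨s, hs⟩

/-- **Explicit second consistency measure.** Let `P : V → S` be determined by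
`b(P v, σ) = ⟪v, E σ⟫`, assume `b(u, σ) = ⟪u, E σ⟫` for all `u ∈ S ∩ V`, `σ ∈ S`, let
`Π_V` be the orthogonal projection onto `V` and `Cstab := sup_{‖v‖=1} ‖P v‖`. Then the
smallest constant `δ_S` with
`sup_{σ ≠ 0} (b(s,σ) − ⟪Π_V s, E σ⟫)/‖b(·,σ)‖_{S'} ≤ δ_S ‖s − Π_V s‖` for all `s ∈ S`
exists, and `max {Cstab, δ_S} ≤ Cqopt ≤ √(Cstab² + δ_S²)`. -/
theorem explicit_second_consistency_measure
    {X : Type*} [NormedAddCommGroup X] [InnerProductSpace ℝ X] [CompleteSpace X]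
    (V S : Submodule ℝ X) [CompleteSpace V] [FiniteDimensional ℝ S]
    (hSne : S ≠ ⊥) (hsum : V ⊔ S = ⊤)
    (b : S →ₗ[ℝ] S →ₗ[ℝ] ℝ) (hb : ∀ s : S, (∀ σ : S, b s σ = 0) → s = 0)
    (E : S →ₗ[ℝ] V)
    (P : V →ₗ[ℝ] S)
    (hP : ∀ (v : V) (σ : S), b (P v) σ = ⟪(v : X), ((E σ : V) : X)⟫)
    (hcons : ∀ u : S, (u : X) ∈ V → ∀ σ : S, b u σ = ⟪(u : X), ((E σ : V) : X)⟫)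
    (Cstab : ℝ)
    (hCstab : Cstab = sSup {r : ℝ | ∃ v : V, ‖(v : X)‖ = 1 ∧ r = ‖(P v : X)‖})
    (Cqopt : ℝ)
    (hCqopt : IsLeast {C : ℝ | ∀ v : V,
        ‖(v : X) - (P v : X)‖ ≤ C * Metric.infDist (v : X) (S : Set X)} Cqopt) :
    ∃ δS : ℝ,
      IsLeast {d : ℝ | 0 ≤ d ∧ ∀ s : S,
          sSup {r : ℝ | ∃ σ : S, σ ≠ 0 ∧
            r = (b s σ - ⟪((Submodule.orthogonalProjectionOnto V (s : X) : X)), ((E σ : V) : X)⟫) /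
                sSup {c : ℝ | ∃ s' : S, ‖s'‖ = 1 ∧ c = b s' σ}} ≤
            d * ‖(s : X) - (Submodule.orthogonalProjectionOnto V (s : X) : X)‖} δS ∧
      max Cstab δS ≤ Cqopt ∧ Cqopt ≤ Real.sqrt (Cstab ^ 2 + δS ^ 2) :=
  explicit_second_consistency_measure_general V S hSne hsum b hb E P hP hcons Cstab hCstab Cqopt
    hCqopt
end

section
/- Optimal smoothing: take b(s,σ) = ⟪s,σ⟫ for s, σ ∈ S (the restriction of the inner product of X to S), and let P : V → S be the linear map determined by ⟪P v, σ⟫ = ⟪v, E σ⟫ for all v ∈ V, σ ∈ S. Then P v = Π_S v for all v ∈ V if and only if E σ = Π_V σ for all σ ∈ S, where Π_S and Π_V are the orthogonal projections of X onto S and onto V, respectively. -/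
open scoped RealInnerProductSpace

theorem Submodule.coe_eq_orthogonalProjectionOnto_iff {𝕜 E : Type*} [RCLike 𝕜]
    [NormedAddCommGroup E] [InnerProductSpace 𝕜 E] (K : Submodule 𝕜 E)
    [K.HasOrthogonalProjection] (y : K) (x : E) :
    (y : E) = K.orthogonalProjectionOnto x ↔ ∀ w : K, inner 𝕜 (y : E) w = inner 𝕜 x w := by
  refine ⟨fun h w => h ▸ K.inner_orthogonalProjectionOnto_eq_of_mem_right w x, fun h => ?_⟩
  refine (K.eq_starProjection_of_mem_of_inner_eq_zero y.2 fun w hw => ?_).symm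
  rw [inner_sub_left, h ⟨w, hw⟩, sub_self]

theorem optimal_smoothing_general
    {X : Type*} [NormedAddCommGroup X] [InnerProductSpace ℝ X]
    (V S : Submodule ℝ X) [CompleteSpace V] [FiniteDimensional ℝ S]
    (E : S →ₗ[ℝ] V)
    (P : V →ₗ[ℝ] S)
    (hP : ∀ (v : V) (σ : S), ⟪((P v : X)), ((σ : X))⟫ = ⟪(v : X), ((E σ : V) : X)⟫) :
    (∀ v : V, (P v : X) = (Submodule.orthogonalProjectionOnto S (v : X) : X)) ↔
      ∀ σ : S, ((E σ : V) : X) = (Submodule.orthogonalProjectionOnto V (σ : X) : X) := by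
  -- Both sides say `⟪v, E σ⟫ = ⟪v, σ⟫` for all `v ∈ V`, `σ ∈ S`.
  simp only [Submodule.coe_eq_orthogonalProjectionOnto_iff, hP]
  rw [forall_comm]
  exact forall₂_congr fun σ v => by rw [real_inner_comm (E σ : X), real_inner_comm (σ : X)]

/-- **Optimal smoothing.** Take `b(s,σ) = ⟪s,σ⟫` (the restriction of the inner product
of `X` to `S`), and let `P : V → S` be determined by `⟪P v, σ⟫ = ⟪v, E σ⟫` for all
`v ∈ V`, `σ ∈ S`. Then `P = Π_S|_V` if and only if `E = Π_V|_S`, where `Π_S`, `Π_V` are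
the orthogonal projections of `X` onto `S` and `V`. -/
theorem optimal_smoothing
    {X : Type*} [NormedAddCommGroup X] [InnerProductSpace ℝ X] [CompleteSpace X]
    (V S : Submodule ℝ X) [CompleteSpace V] [FiniteDimensional ℝ S]
    (hSne : S ≠ ⊥) (hsum : V ⊔ S = ⊤)
    (E : S →ₗ[ℝ] V)
    (P : V →ₗ[ℝ] S)
    (hP : ∀ (v : V) (σ : S), ⟪((P v : X)), ((σ : X))⟫ = ⟪(v : X), ((E σ : V) : X)⟫) :
    (∀ v : V, (P v : X) = (Submodule.orthogonalProjectionOnto S (v : X) : X)) ↔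
      ∀ σ : S, ((E σ : V) : X) = (Submodule.orthogonalProjectionOnto V (σ : X) : X) :=
  optimal_smoothing_general V S E P hP
end
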